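/- arXiv:2405.03637 — 4 statements merged into one kernel-verified Lean document; each statement's English description precedes it below -/
import Mathlib

section
/- Let p ≥ 1 and let a, b be precision-p binary floating-point numbers with |a| ≥ |b|. Let RN be a round-to-nearest function for precision p, and set x = RN(a + b) and y = RN(b − RN(x − a)). Then x + y = a + b exactly (Fast2Sum / Dekker's theorem). -/
/-- A precision-`p` binary floating-point number (unbounded exponent):
a real of the form `m * 2 ^ e` with `m e : ℤ` and `|m| < 2 ^ p`. -/
def FloatRep (p : ℕ) (x : ℝ) : Prop :=
  ∃ m e : ℤ, |m| < 2 ^ p ∧ x = (m : ℝ) * (2 : ℝ) ^ e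

/-- `RN` is a round-to-nearest function for precision `p`: `RN x` is a
precision-`p` float and is at least as close to `x` as any precision-`p`
float (ties broken arbitrarily). -/
def IsRoundNearest (p : ℕ) (RN : ℝ → ℝ) : Prop :=
  ∀ x : ℝ, FloatRep p (RN x) ∧ ∀ f : ℝ, FloatRep p f → |RN x - x| ≤ |f - x|

/-- For nonzero `x`, `ulp x = 2 ^ (⌊log₂ |x|⌋ - p + 1)`. -/
noncomputable def ulp (p : ℕ) (x : ℝ) : ℝ :=
  (2 : ℝ) ^ (Int.log 2 |x| - (p : ℤ) + 1)

lemma two_zpow_pos (g : ℤ) : (0:ℝ) < 2 ^ g := zpow_pos (by norm_num) g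

lemma two_zpow_add (u v : ℤ) : (2:ℝ) ^ (u + v) = 2 ^ u * 2 ^ v :=
  zpow_add₀ (by norm_num) u v

lemma two_zpow_lt_iff {u v : ℤ} : (2:ℝ) ^ u < 2 ^ v ↔ u < v :=
  zpow_lt_zpow_iff_right₀ (by norm_num)

lemma two_zpow_le_iff {u v : ℤ} : (2:ℝ) ^ u ≤ 2 ^ v ↔ u ≤ v :=
  zpow_le_zpow_iff_right₀ (by norm_num)

lemma two_zpow_nat (p : ℕ) : (2:ℝ) ^ (p:ℤ) = 2 ^ p := by
  rw [zpow_natCast]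

/-- From `A * 2^g < 2^(p+g)` conclude `A < 2^p`. -/
lemma lt_pow_of_mul_lt {p : ℕ} {A : ℝ} {g : ℤ} (h : A * 2 ^ g < 2 ^ ((p:ℤ) + g)) :
    A < 2 ^ p := by
  rw [two_zpow_add, two_zpow_nat] at h
  exact lt_of_mul_lt_mul_right h (two_zpow_pos g).le

/-- From `A * 2^g ≤ 2^(p+g)` conclude `A ≤ 2^p`. -/
lemma le_pow_of_mul_le {p : ℕ} {A : ℝ} {g : ℤ} (h : A * 2 ^ g ≤ 2 ^ ((p:ℤ) + g)) :
    A ≤ 2 ^ p := by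
  rw [two_zpow_add, two_zpow_nat] at h
  exact le_of_mul_le_mul_right h (two_zpow_pos g)

lemma shift_eq (k : ℤ) {E e : ℤ} (h : E ≤ e) :
    ((k * 2 ^ (e - E).toNat : ℤ) : ℝ) * 2 ^ E = (k : ℝ) * 2 ^ e := by
  push_cast
  rw [mul_assoc, ← zpow_natCast (2:ℝ), Int.toNat_of_nonneg (sub_nonneg.mpr h), ← two_zpow_add]
  have h9 : e - E + E = e := by omega
  rw [h9]

lemma fr_zero (p : ℕ) : FloatRep p 0 :=
  ⟨0, 0, by simp [pow_pos], by simp⟩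

lemma fr_of_bound {p : ℕ} (hp : 1 ≤ p) (k g : ℤ)
    (h : |(k:ℝ) * 2 ^ g| ≤ (2:ℝ) ^ ((p:ℤ) + g)) : FloatRep p ((k:ℝ) * 2 ^ g) := by
  have hg := two_zpow_pos g
  have hk : |k| ≤ 2 ^ p := by
    have h1 : |(k:ℝ)| * 2 ^ g ≤ 2 ^ ((p:ℤ) + g) := by
      rwa [abs_mul, abs_of_pos hg] at h
    have h2 : |(k:ℝ)| ≤ 2 ^ p := le_pow_of_mul_le h1
    exact_mod_cast h2
  rcases lt_or_eq_of_le hk with hlt | heq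
  · exact ⟨k, g, hlt, rfl⟩
  · have h1 : (1:ℤ) < 2 ^ p := one_lt_pow₀ one_lt_two (by omega)
    rcases eq_or_eq_neg_of_abs_eq heq with hk2 | hk2
    · refine ⟨1, (p:ℤ) + g, by simpa using h1, ?_⟩
      rw [hk2, two_zpow_add, two_zpow_nat]
      push_cast
      ring
    · refine ⟨-1, (p:ℤ) + g, by simpa using h1, ?_⟩
      rw [hk2, two_zpow_add, two_zpow_nat]
      push_cast
      ring

lemma rn_fix {p : ℕ} {RN : ℝ → ℝ} (hRN : IsRoundNearest p RN) {f : ℝ}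
    (hf : FloatRep p f) : RN f = f := by
  have h := (hRN f).2 f hf
  simp only [sub_self, abs_zero] at h
  have h2 := abs_nonneg (RN f - f)
  have h3 : |RN f - f| = 0 := le_antisymm h h2
  have := abs_eq_zero.mp h3
  linarith

lemma fr_norm {p : ℕ} {z : ℝ} (hz : z ≠ 0) (h : FloatRep p z) :
    ∃ m e : ℤ, |m| < 2 ^ p ∧ z = (m:ℝ) * 2 ^ e ∧ (2:ℝ) ^ ((p:ℤ) - 1 + e) ≤ |z| := by
  obtain ⟨m0, e0, hm0, rfl⟩ := h
  have hL : ∀ u v : ℤ, u + 1 = v → (2:ℝ) ^ u * 2 ^ (1:ℤ) = 2 ^ v := by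
    intro u v huv
    rw [← two_zpow_add]
    congr 1
  set z := (m0:ℝ) * 2 ^ e0 with hzdef
  set L := Int.log 2 |z| with hLdef
  have hzpos : 0 < |z| := abs_pos.mpr hz
  have hlow : (2:ℝ) ^ L ≤ |z| := by
    have := Int.zpow_log_le_self (b := 2) (by norm_num) hzpos
    simpa using this
  have hhigh : |z| < 2 ^ (L + 1) := by
    have := Int.lt_zpow_succ_log_self (b := 2) (by norm_num) |z|
    simpa using this
  have habs : |z| = |(m0:ℝ)| * 2 ^ e0 := by
    rw [hzdef, abs_mul, abs_of_pos (two_zpow_pos e0)]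
  have hup : |z| < 2 ^ ((p:ℤ) + e0) := by
    rw [habs, two_zpow_add, two_zpow_nat]
    have : |(m0:ℝ)| < 2 ^ p := by exact_mod_cast hm0
    nlinarith [two_zpow_pos e0]
  have hLe : L < (p:ℤ) + e0 := two_zpow_lt_iff.mp (lt_of_le_of_lt hlow hup)
  have hee0 : L - p + 1 ≤ e0 := by omega
  refine ⟨m0 * 2 ^ (e0 - (L - p + 1)).toNat, L - p + 1, ?_, (shift_eq m0 hee0).symm, ?_⟩
  · have heq : ((m0 * 2 ^ (e0 - (L - p + 1)).toNat : ℤ) : ℝ) * 2 ^ (L - p + 1) = z :=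
      shift_eq m0 hee0
    have hh : |((m0 * 2 ^ (e0 - (L - p + 1)).toNat : ℤ) : ℝ)| * 2 ^ (L - (p:ℤ) + 1)
        < 2 ^ ((p:ℤ) + (L - p + 1)) := by
      rw [← abs_of_pos (two_zpow_pos (L - (p:ℤ) + 1)), ← abs_mul, heq]
      have h9 : (p:ℤ) + (L - p + 1) = L + 1 := by ring
      rw [h9]
      exact hhigh
    have := lt_pow_of_mul_lt hh
    exact_mod_cast this
  · have h9 : (p:ℤ) - 1 + (L - p + 1) = L := by ring
    rw [h9]
    exact hlow

lemma fr_multiple {p : ℕ} {z : ℝ} {g : ℤ} (h : FloatRep p z)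
    (hg : (2:ℝ) ^ ((p:ℤ) - 1 + g) ≤ |z|) : ∃ k : ℤ, z = (k:ℝ) * 2 ^ g := by
  have hz : z ≠ 0 := by
    intro h0
    rw [h0, abs_zero] at hg
    exact absurd hg (not_le.mpr (two_zpow_pos _))
  obtain ⟨m, e, hm, rfl, hnorm⟩ := fr_norm hz h
  have hup : |(m:ℝ) * 2 ^ e| < 2 ^ ((p:ℤ) + e) := by
    rw [abs_mul, abs_of_pos (two_zpow_pos e), two_zpow_add, two_zpow_nat]
    have : |(m:ℝ)| < 2 ^ p := by exact_mod_cast hm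
    nlinarith [two_zpow_pos e]
  have hge : g ≤ e := by
    have h1 := two_zpow_lt_iff.mp (lt_of_le_of_lt hg hup)
    omega
  exact ⟨m * 2 ^ (e - g).toNat, (shift_eq m hge).symm⟩

/-- Error of a round-to-nearest at `t` is at most `2^(p+e)` for any
representation exponent `e` of the rounded value `x`. -/
lemma rn_err {p : ℕ} (hp : 1 ≤ p) {x t : ℝ}
    (hmin : ∀ f : ℝ, FloatRep p f → |x - t| ≤ |f - t|)
    {m e : ℤ} (hm : |m| < 2 ^ p) (hxeq : x = (m:ℝ) * 2 ^ e) :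
    |x - t| ≤ 2 ^ ((p:ℤ) + e) := by
  set c : ℝ := 2 ^ ((p:ℤ) + e) with hc
  have hcpos : 0 < c := two_zpow_pos _
  have h1pow : (1:ℤ) < 2 ^ p := one_lt_pow₀ one_lt_two (by omega)
  have hfc : FloatRep p c := ⟨1, (p:ℤ) + e, by simpa using h1pow, by simp [hc]⟩
  have hfc' : FloatRep p (-c) := ⟨-1, (p:ℤ) + e, by simpa using h1pow, by simp [hc]⟩
  have hxc : |x| < c := by
    have hm' : |(m:ℝ)| < 2 ^ p := by exact_mod_cast hm
    rw [hxeq, abs_mul, abs_of_pos (two_zpow_pos e), hc, two_zpow_add, two_zpow_nat]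
    nlinarith [two_zpow_pos e]
  have h1 := hmin c hfc
  have h2 := hmin (-c) hfc'
  have hx1 : x ≤ |x| := le_abs_self x
  have hx2 : -x ≤ |x| := neg_le_abs x
  have ht1 : t - x ≤ |x - t| := by
    have := neg_abs_le (x - t); linarith [neg_le_iff_add_nonneg.mp this]
  have ht1' : t - x ≤ |x - t| := by
    have := neg_abs_le (x - t); linarith
  have ht2 : x - t ≤ |x - t| := le_abs_self _
  rcases le_total 0 t with ht | ht
  · rcases le_total t c with h | h
    · calc |x - t| ≤ |c - t| := h1
        _ = c - t := abs_of_nonneg (by linarith)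
        _ ≤ c := by linarith
    · exfalso
      have : |c - t| = t - c := by rw [abs_sub_comm]; exact abs_of_nonneg (by linarith)
      rw [this] at h1
      linarith
  · rcases le_total (-c) t with h | h
    · calc |x - t| ≤ |(-c) - t| := h2
        _ = c + t := by rw [abs_sub_comm]; rw [show t - (-c) = c + t by ring] at *;
                        exact abs_of_nonneg (by linarith)
        _ ≤ c := by linarith
    · exfalso
      have : |(-c) - t| = -c - t := abs_of_nonneg (by linarith)
      rw [this] at h2
      linarith

/-- If `|t| ≥ 2^(p+g)` then any round-to-nearest of `t` has `|x| ≥ 2^(p-1+g)`. -/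
lemma rn_big {p : ℕ} (hp : 1 ≤ p) {x t : ℝ}
    (hmin : ∀ f : ℝ, FloatRep p f → |x - t| ≤ |f - t|)
    {g : ℤ} (ht : 2 ^ ((p:ℤ) + g) ≤ |t|) :
    (2:ℝ) ^ ((p:ℤ) - 1 + g) ≤ |x| := by
  by_contra hcon
  push_neg at hcon
  set c : ℝ := 2 ^ ((p:ℤ) + g) with hc
  set c2 : ℝ := 2 ^ ((p:ℤ) - 1 + g) with hc2
  have hcc2 : c = 2 * c2 := by
    rw [hc, hc2, show (p:ℤ) + g = 1 + ((p:ℤ) - 1 + g) by ring, two_zpow_add]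
    norm_num
  have hc2pos : 0 < c2 := two_zpow_pos _
  have h1pow : (1:ℤ) < 2 ^ p := one_lt_pow₀ one_lt_two (by omega)
  have hfc : FloatRep p c := ⟨1, (p:ℤ) + g, by simpa using h1pow, by simp [hc]⟩
  have hfc' : FloatRep p (-c) := ⟨-1, (p:ℤ) + g, by simpa using h1pow, by simp [hc]⟩
  have hx1 : x ≤ |x| := le_abs_self x
  have hx2 : -x ≤ |x| := neg_le_abs x
  have ht1 : t - x ≤ |x - t| := by have := neg_abs_le (x - t); linarith
  have ht2 : x - t ≤ |x - t| := le_abs_self _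
  rcases le_total 0 t with htt | htt
  · have habs : |t| = t := abs_of_nonneg htt
    rw [habs] at ht
    have h1 := hmin c hfc
    have : |c - t| = t - c := by rw [abs_sub_comm]; exact abs_of_nonneg (by linarith)
    rw [this] at h1
    linarith
  · have habs : |t| = -t := abs_of_nonpos htt
    rw [habs] at ht
    have h2 := hmin (-c) hfc'
    have : |(-c) - t| = -c - t := abs_of_nonneg (by linarith)
    rw [this] at h2
    linarith

lemma abs_mul_zpow_le {p : ℕ} {A : ℝ} {g : ℤ} (h : |A| ≤ 2 ^ p) :
    |A * 2 ^ g| ≤ 2 ^ ((p:ℤ) + g) := by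
  rw [abs_mul, abs_of_pos (two_zpow_pos g), two_zpow_add, two_zpow_nat]
  nlinarith [two_zpow_pos g, abs_nonneg A]

/-- Gap bound: a round-to-nearest of `t` is within `2^(log₂|t| - p)` of `t`. -/
lemma rn_gap {p : ℕ} (hp : 1 ≤ p) {x t : ℝ}
    (hmin : ∀ f : ℝ, FloatRep p f → |x - t| ≤ |f - t|) :
    |x - t| ≤ 2 ^ (Int.log 2 |t| - (p:ℤ)) := by
  set L : ℤ := Int.log 2 |t| with hL
  set E : ℤ := L - p + 1 with hE
  have hEpos := two_zpow_pos E
  have hhigh : |t| < 2 ^ ((p:ℤ) + E) := by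
    have h1 : |t| < 2 ^ (L + 1) := by
      have := Int.lt_zpow_succ_log_self (b := 2) (by norm_num) |t|
      simpa using this
    have h2 : L + 1 = (p:ℤ) + E := by omega
    rwa [h2] at h1
  have hub : t < 2 ^ ((p:ℤ) + E) := lt_of_le_of_lt (le_abs_self t) hhigh
  have hlb : -(2 ^ ((p:ℤ) + E)) < t := by
    have := lt_of_le_of_lt (neg_le_abs t) hhigh
    linarith
  rw [two_zpow_add, two_zpow_nat] at hub hlb
  set k : ℤ := ⌊t / 2 ^ E⌋ with hk
  have hk1 : (k:ℝ) * 2 ^ E ≤ t := by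
    have := Int.floor_le (t / 2 ^ E)
    calc (k:ℝ) * 2 ^ E ≤ (t / 2 ^ E) * 2 ^ E := by nlinarith
    _ = t := div_mul_cancel₀ t (ne_of_gt hEpos)
  have hk2 : t < ((k:ℝ) + 1) * 2 ^ E := by
    have := Int.lt_floor_add_one (t / 2 ^ E)
    calc t = (t / 2 ^ E) * 2 ^ E := (div_mul_cancel₀ t (ne_of_gt hEpos)).symm
    _ < ((k:ℝ) + 1) * 2 ^ E := by nlinarith
  have hkup : (k:ℝ) < 2 ^ p := by
    by_contra hcc
    push_neg at hcc
    nlinarith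
  have hklow : (-(2:ℝ) ^ p) - 1 < k := by
    by_contra hcc
    push_neg at hcc
    nlinarith
  have hkupz : k ≤ 2 ^ p - 1 := by
    have : (k:ℝ) < ((2 ^ p : ℤ) : ℝ) := by push_cast; exact hkup
    have := Int.cast_lt.mp this
    omega
  have hklowz : -(2 ^ p) ≤ k := by
    have : ((-(2 ^ p) - 1 : ℤ) : ℝ) < k := by push_cast; push_cast at hklow; linarith
    have := Int.cast_lt.mp this
    omega
  have hfloat1 : FloatRep p ((k:ℝ) * 2 ^ E) := by
    apply fr_of_bound hp
    apply abs_mul_zpow_le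
    rw [abs_le]
    refine ⟨?_, by linarith⟩
    have h9 : ((-(2^p) : ℤ):ℝ) ≤ (k:ℝ) := by exact_mod_cast hklowz
    push_cast at h9
    linarith
  have hfloat2 : FloatRep p (((k + 1 : ℤ):ℝ) * 2 ^ E) := by
    apply fr_of_bound hp
    apply abs_mul_zpow_le
    have h1 : ((k + 1 : ℤ):ℝ) ≤ 2 ^ p := by
      have : (k + 1 : ℤ) ≤ 2 ^ p := by omega
      exact_mod_cast this
    have h2 : -((2:ℝ) ^ p) ≤ ((k + 1 : ℤ):ℝ) := by
      have : -(2 ^ p) ≤ (k + 1 : ℤ) := by exact_mod_cast hklowz.trans (by omega)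
      exact_mod_cast this
    exact abs_le.mpr ⟨h2, h1⟩
  have hgap1 := hmin _ hfloat1
  have hgap2 := hmin _ hfloat2
  have habs1 : |(k:ℝ) * 2 ^ E - t| = t - (k:ℝ) * 2 ^ E := by
    rw [abs_sub_comm]; exact abs_of_nonneg (by linarith)
  have habs2 : |((k + 1 : ℤ):ℝ) * 2 ^ E - t| = ((k + 1 : ℤ):ℝ) * 2 ^ E - t := by
    push_cast
    exact abs_of_nonneg (by linarith)
  rw [habs1] at hgap1
  rw [habs2] at hgap2
  have hE2 : (2:ℝ) ^ E = 2 * 2 ^ (L - (p:ℤ)) := by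
    rw [hE, show L - (p:ℤ) + 1 = 1 + (L - p) by ring, two_zpow_add]
    norm_num
  have hgoal : |x - t| ≤ 2 ^ (L - (p:ℤ)) := by
    rcases le_total (t - (k:ℝ) * 2 ^ E) (2 ^ (L - (p:ℤ))) with hcase | hcase
    · linarith
    · push_cast at hgap2
      linarith
  exact hgoal

/-- The rounding error of a floating-point addition is itself a float. -/
lemma errB {p : ℕ} (hp : 1 ≤ p) {RN : ℝ → ℝ} (hRN : IsRoundNearest p RN)
    {a b : ℝ} (ha : FloatRep p a) (hb : FloatRep p b) (hab : |b| ≤ |a|) :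
    FloatRep p (a + b - RN (a + b)) := by
  obtain ⟨ma, ea, hma, haeq⟩ := ha
  obtain ⟨mb, eb, hmb, hbeq⟩ := hb
  obtain ⟨hxf, hmin⟩ := hRN (a + b)
  obtain ⟨mx, ex, hmx, hxeq⟩ := hxf
  set x := RN (a + b) with hxdef
  set E : ℤ := min ea (min eb ex) with hE
  have hEa : E ≤ ea := by omega
  have hEb : E ≤ eb := by omega
  have hEx : E ≤ ex := by omega
  set K : ℤ := ma * 2 ^ (ea - E).toNat + mb * 2 ^ (eb - E).toNat
      - mx * 2 ^ (ex - E).toNat with hK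
  have hreq : a + b - x = (K:ℝ) * 2 ^ E := by
    have h1 := shift_eq ma hEa
    have h2 := shift_eq mb hEb
    have h3 := shift_eq mx hEx
    rw [hK, haeq, hbeq, hxeq]
    push_cast
    push_cast at h1 h2 h3
    linarith [h1, h2, h3]
  have herr_b : |a + b - x| ≤ |b| := by
    have h := hmin a ⟨ma, ea, hma, haeq⟩
    have h9 : a - (a + b) = -b := by ring
    rw [h9, abs_neg] at h
    rwa [abs_sub_comm]
  have herr_a : |a + b - x| ≤ |a| := herr_b.trans hab
  have herr_x : |a + b - x| ≤ 2 ^ ((p:ℤ) + ex) := by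
    have := rn_err hp hmin hmx hxeq
    rwa [abs_sub_comm] at this
  have hbb : |b| ≤ 2 ^ ((p:ℤ) + eb) := by
    have h9 : |(mb:ℝ)| ≤ 2 ^ p := by exact_mod_cast hmb.le
    rw [hbeq]; exact abs_mul_zpow_le h9
  have haa : |a| ≤ 2 ^ ((p:ℤ) + ea) := by
    have h9 : |(ma:ℝ)| ≤ 2 ^ p := by exact_mod_cast hma.le
    rw [haeq]; exact abs_mul_zpow_le h9
  have hbound : |a + b - x| ≤ 2 ^ ((p:ℤ) + E) := by
    have hcases : E = ea ∨ E = eb ∨ E = ex := by omega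
    rcases hcases with h | h | h <;> rw [h]
    · exact herr_a.trans haa
    · exact herr_b.trans hbb
    · exact herr_x
  rw [hreq]
  exact fr_of_bound hp K E (by rw [← hreq]; exact hbound)

/-- The key cancellation lemma: `RN(a+b) - a` is a float when `|b| ≤ |a|`. -/
lemma errA {p : ℕ} (hp : 1 ≤ p) {RN : ℝ → ℝ} (hRN : IsRoundNearest p RN)
    {a b : ℝ} (ha : FloatRep p a) (hb : FloatRep p b) (hab : |b| ≤ |a|) :
    FloatRep p (RN (a + b) - a) := by
  by_cases hb0 : b = 0
  · have : RN (a + b) = a := by rw [hb0, add_zero]; exact rn_fix hRN ha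
    rw [this, sub_self]
    exact fr_zero p
  have ha0 : a ≠ 0 := by
    intro h0
    rw [h0, abs_zero] at hab
    exact hb0 (abs_nonpos_iff.mp hab)
  obtain ⟨ma, ea, hma, haeq, hanorm⟩ := fr_norm ha0 ha
  obtain ⟨mb, eb, hmb, hbeq, hbnorm⟩ := fr_norm hb0 hb
  obtain ⟨hxf, hmin⟩ := hRN (a + b)
  set x := RN (a + b) with hxdef
  set t := a + b with htdef
  have haup : |a| ≤ 2 ^ ((p:ℤ) + ea) := by
    have h9 : |(ma:ℝ)| ≤ 2 ^ p := by exact_mod_cast hma.le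
    rw [haeq]; exact abs_mul_zpow_le h9
  have hbup : |b| ≤ 2 ^ ((p:ℤ) + eb) := by
    have h9 : |(mb:ℝ)| ≤ 2 ^ p := by exact_mod_cast hmb.le
    rw [hbeq]; exact abs_mul_zpow_le h9
  have ha_up2 : |a| ≤ ((2:ℝ) ^ p - 1) * 2 ^ ea := by
    have h8 : |ma| ≤ 2 ^ p - 1 := by omega
    have h9 : |(ma:ℝ)| ≤ (2:ℝ) ^ p - 1 := by exact_mod_cast h8
    rw [haeq, abs_mul, abs_of_pos (two_zpow_pos ea)]
    nlinarith [two_zpow_pos ea, abs_nonneg (ma:ℝ)]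
  have hb_up2 : |b| ≤ ((2:ℝ) ^ p - 1) * 2 ^ eb := by
    have h8 : |mb| ≤ 2 ^ p - 1 := by omega
    have h9 : |(mb:ℝ)| ≤ (2:ℝ) ^ p - 1 := by exact_mod_cast h8
    rw [hbeq, abs_mul, abs_of_pos (two_zpow_pos eb)]
    nlinarith [two_zpow_pos eb, abs_nonneg (mb:ℝ)]
  have ha_lt : |a| < 2 ^ ((p:ℤ) + ea) := by
    have hexp : (2:ℝ) ^ ((p:ℤ) + ea) = 2 ^ p * 2 ^ ea := by
      rw [two_zpow_add, two_zpow_nat]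
    nlinarith [two_zpow_pos ea, ha_up2]
  have heab : eb ≤ ea := by
    have h1 : (2:ℝ) ^ ((p:ℤ) - 1 + eb) < 2 ^ ((p:ℤ) + ea) :=
      lt_of_le_of_lt (hbnorm.trans hab) ha_lt
    have := two_zpow_lt_iff.mp h1
    omega
  set M : ℤ := ma * 2 ^ (ea - eb).toNat + mb with hM
  have hteq : t = (M:ℝ) * 2 ^ eb := by
    have h1 := shift_eq ma heab
    rw [htdef, hM, haeq, hbeq]
    push_cast
    push_cast at h1
    linarith
  by_cases hc1 : |t| ≤ 2 ^ ((p:ℤ) + eb)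
  · -- t is itself a float, so x = t and x - a = b
    have hft : FloatRep p t := by
      rw [hteq]
      exact fr_of_bound hp M eb (by rw [← hteq]; exact hc1)
    have hxt : x = t := rn_fix hRN hft
    have h9 : x - a = b := by rw [hxt, htdef]; ring
    rw [h9]
    exact ⟨mb, eb, hmb, hbeq⟩
  push_neg at hc1
  have htpos : 0 < |t| := lt_trans (two_zpow_pos _) hc1
  have hx_t : |x - t| ≤ |b| := by
    have h := hmin a ⟨ma, ea, hma, haeq⟩
    have h9 : a - t = -b := by rw [htdef]; ring
    rwa [h9, abs_neg] at h
  have hta : |t - a| = |b| := by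
    have h9 : t - a = b := by rw [htdef]; ring
    rw [h9]
  have hxa2b : |x - a| ≤ 2 * |b| := by
    have h1 : |x - a| ≤ |x - t| + |t - a| := abs_sub_le x t a
    linarith
  by_cases hc2 : |x - a| ≤ 2 ^ ((p:ℤ) + eb)
  · -- x is a multiple of 2^eb and the difference is small enough
    have hxbig : (2:ℝ) ^ ((p:ℤ) - 1 + eb) ≤ |x| := rn_big hp hmin hc1.le
    obtain ⟨kx, hkx⟩ := fr_multiple hxf hxbig
    set K : ℤ := kx - ma * 2 ^ (ea - eb).toNat with hKd
    have hdiff : x - a = (K:ℝ) * 2 ^ eb := by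
      have h1 := shift_eq ma heab
      rw [hKd, hkx, haeq]
      push_cast
      push_cast at h1
      linarith
    rw [hdiff]
    exact fr_of_bound hp K eb (by rw [← hdiff]; exact hc2)
  push_neg at hc2
  have hgap := rn_gap hp hmin
  set L : ℤ := Int.log 2 |t| with hL
  have hxa_le : |x - a| ≤ 2 ^ (L - (p:ℤ)) + |b| := by
    have h1 : |x - a| ≤ |x - t| + |t - a| := abs_sub_le x t a
    linarith
  have hkey : (2:ℝ) ^ eb < 2 ^ (L - (p:ℤ)) := by
    have hexp : (2:ℝ) ^ ((p:ℤ) + eb) = 2 ^ p * 2 ^ eb := by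
      rw [two_zpow_add, two_zpow_nat]
    have h9 : ((2:ℝ) ^ p - 1) * 2 ^ eb = 2 ^ p * 2 ^ eb - 2 ^ eb := by ring
    linarith
  have hLlow : (p:ℤ) + eb + 1 ≤ L := by
    have := two_zpow_lt_iff.mp hkey
    omega
  have hLup : L ≤ (p:ℤ) + ea := by
    have h1 : |t| < 2 ^ ((p:ℤ) + ea + 1) := by
      have h2 : |t| ≤ |a| + |b| := by rw [htdef]; exact abs_add_le a b
      have h3 : (2:ℝ) ^ ((p:ℤ) + ea + 1) = 2 ^ ((p:ℤ) + ea) * 2 := by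
        rw [show (p:ℤ) + ea + 1 = ((p:ℤ) + ea) + 1 by ring, two_zpow_add]
        norm_num
      linarith [hab.trans ha_lt.le]
    have h5 : L < (p:ℤ) + ea + 1 := by
      have := (Int.lt_zpow_iff_log_lt (b := 2) (by norm_num) htpos).mp (by simpa using h1)
      simpa using this
    omega
  have hea1 : eb + 1 ≤ ea := by omega
  have htbig : (2:ℝ) ^ ((p:ℤ) + (eb + 1)) ≤ |t| := by
    have h1 : (2:ℝ) ^ L ≤ |t| := by
      have := Int.zpow_log_le_self (b := 2) (by norm_num) htpos
      simpa using this
    have h2 : (2:ℝ) ^ ((p:ℤ) + (eb + 1)) ≤ 2 ^ L := two_zpow_le_iff.mpr (by omega)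
    linarith
  have hxbig : (2:ℝ) ^ ((p:ℤ) - 1 + (eb + 1)) ≤ |x| := rn_big hp hmin htbig
  obtain ⟨kx, hkx⟩ := fr_multiple hxf hxbig
  set K : ℤ := kx - ma * 2 ^ (ea - (eb + 1)).toNat with hKd
  have hdiff : x - a = (K:ℝ) * 2 ^ (eb + 1) := by
    have h1 := shift_eq ma hea1
    rw [hKd, hkx, haeq]
    push_cast
    push_cast at h1
    linarith
  have hbnd : |x - a| ≤ 2 ^ ((p:ℤ) + (eb + 1)) := by
    have hexp : (2:ℝ) ^ ((p:ℤ) + (eb + 1)) = 2 ^ p * 2 ^ eb * 2 := by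
      rw [show (p:ℤ) + (eb + 1) = ((p:ℤ) + eb) + 1 by ring, two_zpow_add, two_zpow_add,
        two_zpow_nat]
      norm_num
    have h9 : ((2:ℝ) ^ p - 1) * 2 ^ eb = 2 ^ p * 2 ^ eb - 2 ^ eb := by ring
    have := two_zpow_pos eb
    linarith
  rw [hdiff]
  exact fr_of_bound hp K (eb + 1) (by rw [← hdiff]; exact hbnd)

/-- Fast2Sum / Dekker's theorem. -/
theorem fast2sum_exact (p : ℕ) (hp : 1 ≤ p) (RN : ℝ → ℝ)
    (hRN : IsRoundNearest p RN) (a b : ℝ)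
    (ha : FloatRep p a) (hb : FloatRep p b) (hab : |b| ≤ |a|)
    (x y : ℝ) (hx : x = RN (a + b)) (hy : y = RN (b - RN (x - a))) :
    x + y = a + b := by
  subst hx
  have hA : FloatRep p (RN (a + b) - a) := errA hp hRN ha hb hab
  have hfixA : RN (RN (a + b) - a) = RN (a + b) - a := rn_fix hRN hA
  have hB : FloatRep p (a + b - RN (a + b)) := errB hp hRN ha hb hab
  have h9 : b - (RN (a + b) - a) = a + b - RN (a + b) := by ring
  rw [hfixA, h9, rn_fix hRN hB] at hy
  rw [hy]
  ring
end

section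
/- Sterbenz's lemma (supporting exactness lemma for Fast2Sum): let p ≥ 1 and let a, b be precision-p binary floating-point numbers with b/2 ≤ a ≤ 2b (in particular a, b ≥ 0). Then a − b is itself a precision-p binary floating-point number, so the floating-point subtraction of a and b is exact. -/
/-- Sterbenz's lemma: if `b / 2 ≤ a ≤ 2 * b` then `a - b` is exactly
representable in precision `p`. -/
theorem sterbenz (p : ℕ) (hp : 1 ≤ p) (a b : ℝ)
    (ha : FloatRep p a) (hb : FloatRep p b)
    (h1 : b / 2 ≤ a) (h2 : a ≤ 2 * b) :
    FloatRep p (a - b) := by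
  obtain ⟨ma, ea, hma, haeq⟩ := ha
  obtain ⟨mb, eb, hmb, hbeq⟩ := hb
  have hb0 : (0:ℝ) ≤ b := by linarith
  have ha0 : (0:ℝ) ≤ a := by linarith
  set e := min ea eb with he
  have hea : 0 ≤ ea - e := by simp [he]
  have heb : 0 ≤ eb - e := by simp [he]
  set m : ℤ := ma * 2 ^ (ea - e).toNat - mb * 2 ^ (eb - e).toNat with hm
  have hpow : ∀ x : ℤ, 0 ≤ x - e → ((2:ℝ) ^ (x - e).toNat) * (2:ℝ) ^ e = (2:ℝ) ^ x := by
    intro x hx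
    rw [← zpow_natCast (2:ℝ) (x - e).toNat, Int.toNat_of_nonneg hx,
      ← zpow_add₀ (by norm_num : (2:ℝ) ≠ 0)]
    ring_nf
  have hkey : a - b = (m : ℝ) * (2:ℝ) ^ e := by
    rw [hm, haeq, hbeq]
    push_cast
    rw [sub_mul, mul_assoc, mul_assoc, hpow ea hea, hpow eb heb]
  refine ⟨m, e, ?_, hkey⟩
  have h2e : (0:ℝ) < (2:ℝ) ^ e := zpow_pos (by norm_num) e
  -- |a - b| ≤ a and |a - b| ≤ b
  have habsa : |a - b| ≤ a := abs_le.mpr ⟨by linarith, by linarith⟩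
  have habsb : |a - b| ≤ b := abs_le.mpr ⟨by linarith, by linarith⟩
  have habs : |a - b| = (|m| : ℝ) * (2:ℝ) ^ e := by
    rw [hkey, abs_mul, abs_of_pos h2e]
  rcases le_total ea eb with hle | hle
  · have hee : e = ea := min_eq_left hle
    have : (|m| : ℝ) * (2:ℝ) ^ e ≤ (ma : ℝ) * (2:ℝ) ^ e := by
      rw [← habs, hee, ← haeq]; exact habsa
    have hmle : |m| ≤ ma := by
      have := le_of_mul_le_mul_right this h2e
      exact_mod_cast this
    calc |m| ≤ ma := hmle
      _ ≤ |ma| := le_abs_self ma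
      _ < 2 ^ p := hma
  · have hee : e = eb := min_eq_right hle
    have : (|m| : ℝ) * (2:ℝ) ^ e ≤ (mb : ℝ) * (2:ℝ) ^ e := by
      rw [← habs, hee, ← hbeq]; exact habsb
    have hmle : |m| ≤ mb := by
      have := le_of_mul_le_mul_right this h2e
      exact_mod_cast this
    calc |m| ≤ mb := hmle
      _ ≤ |mb| := le_abs_self mb
      _ < 2 ^ p := hmb
end

section
/- TwoSum exactness (no magnitude ordering required): let p ≥ 1, let RN be a round-to-nearest function for precision p, and let a, b be precision-p binary floating-point numbers. Define x = RN(a + b), b_virtual = RN(x − a), a_virtual = RN(x − b_virtual), b_roundoff = RN(b − b_virtual), a_roundoff = RN(a − a_virtual), and y = RN(a_roundoff + b_roundoff). Then x + y = a + b exactly. -/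
/-- `s` is a nearest precision-`p` float to `t`. -/
def IsN (p : ℕ) (t s : ℝ) : Prop :=
  FloatRep p s ∧ ∀ f : ℝ, FloatRep p f → |s - t| ≤ |f - t|

/-- `x` is an integer multiple of `2^e`. -/
def Mult (e : ℤ) (x : ℝ) : Prop := ∃ K : ℤ, x = (K : ℝ) * (2:ℝ) ^ e

namespace TS

variable {p : ℕ}

lemma floatRep_zero : FloatRep p 0 := ⟨0, 0, by positivity, by simp⟩

lemma floatRep_neg {x : ℝ} (h : FloatRep p x) : FloatRep p (-x) := by
  obtain ⟨m, e, hm, rfl⟩ := h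
  exact ⟨-m, e, by simpa using hm, by push_cast; ring⟩

lemma floatRep_scale {x : ℝ} (h : FloatRep p x) (k : ℤ) : FloatRep p (x * (2:ℝ)^k) := by
  obtain ⟨m, e, hm, rfl⟩ := h
  exact ⟨m, e + k, hm, by rw [zpow_add₀ (two_ne_zero) e k]; ring⟩

lemma floatRep_mantissa_le (hp : 1 ≤ p) {k : ℤ} (e : ℤ) (hk : |k| ≤ 2 ^ p) :
    FloatRep p ((k:ℝ) * (2:ℝ)^e) := by
  rcases lt_or_eq_of_le hk with h | h
  · exact ⟨k, e, h, rfl⟩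
  · have h2 : k = 2^p ∨ k = -(2^p) := abs_eq (by positivity) |>.mp h
    have hpow : ((2:ℤ)^p : ℝ) * (2:ℝ)^e = ((2:ℤ)^(p-1) : ℝ) * (2:ℝ)^(e+1) := by
      have : (2:ℝ)^(p-1) * 2 = (2:ℝ)^p := by
        rw [← pow_succ]; congr 1; omega
      rw [zpow_add₀ (two_ne_zero) e 1]
      push_cast
      nlinarith [this, zpow_pos (two_pos (α := ℝ)) e]
    have hm : |(2:ℤ)^(p-1)| < 2^p := by
      rw [abs_of_nonneg (by positivity)]
      exact pow_lt_pow_right₀ (by norm_num) (by omega)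
    rcases h2 with rfl | rfl
    · exact ⟨2^(p-1), e+1, hm, by push_cast at hpow ⊢; linarith⟩
    · refine ⟨-2^(p-1), e+1, by simpa using hm, ?_⟩
      push_cast at hpow ⊢; linarith

lemma isN_neg {t s : ℝ} (h : IsN p t s) : IsN p (-t) (-s) := by
  refine ⟨floatRep_neg h.1, fun f hf => ?_⟩
  have := h.2 (-f) (floatRep_neg hf)
  calc |-s - -t| = |s - t| := by rw [← abs_neg]; ring_nf
    _ ≤ |(-f) - t| := this
    _ = |f - -t| := by rw [← abs_neg]; ring_nf

lemma isN_eq {t s : ℝ} (ht : FloatRep p t) (h : IsN p t s) : s = t := by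
  have h1 := h.2 t ht
  simp only [sub_self, abs_zero] at h1
  have h2 : |s - t| = 0 := le_antisymm h1 (abs_nonneg _)
  have := abs_eq_zero.mp h2
  linarith [sub_eq_zero.mp (abs_eq_zero.mp h2)]

lemma isN_lower {t s f : ℝ} (hf : FloatRep p f) (h : IsN p t s) (hft : f ≤ t) : f ≤ s := by
  by_contra hc
  push_neg at hc
  have h1 := h.2 f hf
  rw [abs_of_nonpos (by linarith), abs_of_nonpos (by linarith)] at h1
  linarith

lemma isN_upper {t s f : ℝ} (hf : FloatRep p f) (h : IsN p t s) (hft : t ≤ f) : s ≤ f := by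
  by_contra hc
  push_neg at hc
  have h1 := h.2 f hf
  rw [abs_of_nonneg (by linarith), abs_of_nonneg (by linarith)] at h1
  linarith

lemma mult_of_rep {m e' : ℤ} (e : ℤ) (h : e ≤ e') : Mult e ((m:ℝ) * (2:ℝ)^e') :=
  ⟨m * 2^(e' - e).toNat, by
    push_cast
    rw [mul_assoc, ← zpow_natCast (2:ℝ), ← zpow_add₀ (two_ne_zero)]
    congr 2
    omega⟩

lemma mult_sub {e : ℤ} {x y : ℝ} (hx : Mult e x) (hy : Mult e y) : Mult e (x - y) := by
  obtain ⟨K, rfl⟩ := hx; obtain ⟨L, rfl⟩ := hy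
  exact ⟨K - L, by push_cast; ring⟩

lemma mult_add {e : ℤ} {x y : ℝ} (hx : Mult e x) (hy : Mult e y) : Mult e (x + y) := by
  obtain ⟨K, rfl⟩ := hx; obtain ⟨L, rfl⟩ := hy
  exact ⟨K + L, by push_cast; ring⟩

lemma mult_neg {e : ℤ} {x : ℝ} (hx : Mult e x) : Mult e (-x) := by
  obtain ⟨K, rfl⟩ := hx
  exact ⟨-K, by push_cast; ring⟩

/-- A float within `2^(e-1)` of any `t` with `|t| ≤ 2^(p+e)`. -/
lemma exists_near (hp : 1 ≤ p) (t : ℝ) (e : ℤ) (ht : |t| ≤ (2:ℝ)^((p:ℤ) + e)) :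
    ∃ f : ℝ, FloatRep p f ∧ |f - t| ≤ (2:ℝ)^(e - 1) := by
  set z := t / (2:ℝ)^e with hz
  have he : (0:ℝ) < (2:ℝ)^e := zpow_pos two_pos e
  refine ⟨(round z : ℝ) * (2:ℝ)^e, ?_, ?_⟩
  · apply floatRep_mantissa_le hp
    have hzb : |z| ≤ (2:ℝ)^(p:ℤ) := by
      rw [hz, abs_div, abs_of_pos he, div_le_iff₀ he, ← zpow_add₀ (two_ne_zero)]
      exact ht
    have h1 : |(round z : ℝ)| ≤ |z| + 1/2 := by
      have := abs_sub_round z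
      calc |(round z : ℝ)| ≤ |z| + |(round z : ℝ) - z| := by
            have := abs_add_le z ((round z : ℝ) - z); simpa using this
        _ ≤ |z| + 1/2 := by rw [show |(round z:ℝ) - z| = |z - (round z:ℝ)| from abs_sub_comm _ _]; linarith
    have h2 : (|round z| : ℝ) < (2:ℝ)^(p:ℤ) + 1 := by
      push_cast
      calc (|(round z : ℝ)|) ≤ |z| + 1/2 := h1
        _ < (2:ℝ)^(p:ℤ) + 1 := by linarith
    have h3 : (|round z| : ℝ) < ((2^p + 1 : ℤ) : ℝ) := by push_cast [zpow_natCast] at h2 ⊢; linarith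
    exact_mod_cast Int.lt_add_one_iff.mp (by exact_mod_cast h3)
  · have := abs_sub_round z
    have key : (round z : ℝ) * (2:ℝ)^e - t = ((round z:ℝ) - z) * (2:ℝ)^e := by
      rw [hz]; field_simp
    rw [key, abs_mul, abs_of_pos he]
    calc |(round z:ℝ) - z| * (2:ℝ)^e ≤ (1/2) * (2:ℝ)^e := by
          rw [show |(round z:ℝ) - z| = |z - (round z:ℝ)| from abs_sub_comm _ _]
          exact mul_le_mul_of_nonneg_right this he.le
      _ = (2:ℝ)^(e-1) := by
          rw [zpow_sub₀ (two_ne_zero)]; ring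

lemma isN_err_le (hp : 1 ≤ p) {t s : ℝ} {e : ℤ} (h : IsN p t s)
    (ht : |t| ≤ (2:ℝ)^((p:ℤ) + e)) : |s - t| ≤ (2:ℝ)^(e - 1) := by
  obtain ⟨f, hf, hfe⟩ := exists_near hp t e ht
  exact le_trans (h.2 f hf) hfe

lemma isN_grid_pos (hp : 1 ≤ p) {M e : ℤ} {s : ℝ} (hM : (2:ℤ)^p ≤ M)
    (h : IsN p ((M:ℝ) * (2:ℝ)^e) s) : Mult e s := by
  set c : ℝ := (M:ℝ) * (2:ℝ)^e with hc
  have hM0 : 0 < M := lt_of_lt_of_le (by positivity) hM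
  have hMt' : (M.toNat : ℤ) = M := Int.toNat_of_nonneg hM0.le
  set L : ℕ := Nat.log 2 M.toNat with hL
  have hMt : M.toNat ≠ 0 := by omega
  have hpL : p ≤ L := by
    apply (Nat.le_log_iff_pow_le one_lt_two hMt).mpr
    have : ((2^p : ℕ) : ℤ) ≤ M := by push_cast; exact hM
    omega
  set k : ℕ := L - p + 1 with hk
  have hk1 : 1 ≤ k := by omega
  have hLpk : L + 1 = p + k := by omega
  have hMl : (2:ℤ)^L ≤ M := by
    have h1 : (2:ℕ)^L ≤ M.toNat := Nat.pow_log_le_self 2 hMt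
    have : ((2^L : ℕ) : ℤ) ≤ (M.toNat : ℤ) := by exact_mod_cast h1
    push_cast at this
    omega
  have hMu : M < (2:ℤ)^(p + k) := by
    have h1 : M.toNat < (2:ℕ)^(L+1) := Nat.lt_pow_succ_log_self one_lt_two M.toNat
    have : (M.toNat : ℤ) < ((2^(L+1) : ℕ) : ℤ) := by exact_mod_cast h1
    push_cast at this
    rw [← hLpk]
    omega
  -- the competitor float f
  have h2k : (0:ℤ) < 2^k := by positivity
  set mf : ℤ := M / 2^k with hmf
  have hmf0 : 0 ≤ mf := Int.ediv_nonneg hM0.le h2k.le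
  have hmfu : mf < 2^p := by
    rw [hmf, Int.ediv_lt_iff_lt_mul h2k]
    calc M < 2^(p+k) := hMu
      _ = 2^p * 2^k := by rw [pow_add]
  set f : ℝ := ((mf : ℝ) * (2:ℝ)^k) * (2:ℝ)^e with hf
  have hfF : FloatRep p f := by
    refine ⟨mf, (k:ℤ) + e, ?_, ?_⟩
    · rwa [abs_of_nonneg hmf0]
    · rw [zpow_add₀ two_ne_zero, hf, zpow_natCast, mul_assoc]
  have hfc : |f - c| ≤ ((2:ℝ)^k - 1) * (2:ℝ)^e := by
    have hdm : (M % 2^k : ℤ) = M - 2^k * mf := by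
      have := Int.mul_ediv_add_emod M (2^k)
      rw [hmf]; linarith [this]
    have hmod0 : (0:ℤ) ≤ M % 2^k := Int.emod_nonneg M (by positivity)
    have hmodu : M % 2^k < 2^k := Int.emod_lt_of_pos M h2k
    have hfcd : f - c = -(((M % 2^k : ℤ) : ℝ) * (2:ℝ)^e) := by
      rw [hf, hc, hdm]
      push_cast
      ring
    have c1 : |((M % 2^k : ℤ):ℝ)| = ((M % 2^k : ℤ):ℝ) :=
      abs_of_nonneg (by exact_mod_cast hmod0)
    have c2 : |(2:ℝ)^e| = (2:ℝ)^e := abs_of_pos (zpow_pos two_pos e)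
    rw [hfcd, abs_neg, abs_mul, c1, c2]
    have hle : ((M % 2^k : ℤ) : ℝ) ≤ (2:ℝ)^k - 1 := by
      have h1 : M % 2^k ≤ 2^k - 1 := by omega
      have : ((M % 2^k : ℤ) : ℝ) ≤ (((2:ℤ)^k - 1 : ℤ) : ℝ) := by exact_mod_cast h1
      push_cast at this
      linarith
    exact mul_le_mul_of_nonneg_right hle (zpow_pos two_pos e).le
  -- now take the representation of s
  obtain ⟨m, e', hm, hse⟩ := h.1
  rcases le_or_gt e e' with hee | hee
  · rw [hse]; exact mult_of_rep e hee
  · exfalso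
    -- s is too small: |s| ≤ (2^p - 1) * 2^(e-1)
    have hsb : |s| ≤ ((2:ℝ)^p - 1) * (2:ℝ)^(e-1) := by
      have c2 : |(2:ℝ)^e'| = (2:ℝ)^e' := abs_of_pos (zpow_pos two_pos e')
      rw [hse, abs_mul, c2]
      have h1 : |(m:ℝ)| ≤ (2:ℝ)^p - 1 := by
        have h0 : |m| ≤ 2^p - 1 := by omega
        have : ((|m|:ℤ):ℝ) ≤ (((2:ℤ)^p - 1 : ℤ):ℝ) := by exact_mod_cast h0
        push_cast at this
        linarith
      have h2 : (2:ℝ)^e' ≤ (2:ℝ)^(e-1) := zpow_le_zpow_right₀ one_le_two (by omega)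
      have h3 : (0:ℝ) ≤ (2:ℝ)^p - 1 := by
        have : (1:ℝ) ≤ 2^p := one_le_pow₀ one_le_two
        linarith
      calc |(m:ℝ)| * (2:ℝ)^e' ≤ ((2:ℝ)^p - 1) * (2:ℝ)^e' :=
            mul_le_mul_of_nonneg_right h1 (zpow_pos two_pos e').le
        _ ≤ ((2:ℝ)^p - 1) * (2:ℝ)^(e-1) := mul_le_mul_of_nonneg_left h2 h3
    have hcl : (2:ℝ)^(p+k) * (2:ℝ)^(e-1) ≤ c := by
      have h1 : ((2:ℤ)^L : ℝ) ≤ (M:ℝ) := by exact_mod_cast hMl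
      have h2 : (2:ℝ)^(L:ℤ) * (2:ℝ)^e = (2:ℝ)^((L:ℤ)+1) * (2:ℝ)^(e-1) := by
        rw [← zpow_add₀ (two_ne_zero : (2:ℝ) ≠ 0), ← zpow_add₀ (two_ne_zero : (2:ℝ) ≠ 0)]
        congr 1; omega
      have h4 : (2:ℝ)^((L:ℤ)+1) = (2:ℝ)^(p+k) := by
        rw [show ((L:ℤ)+1) = ((p+k : ℕ) : ℤ) by omega, zpow_natCast]
      calc (2:ℝ)^(p+k) * (2:ℝ)^(e-1) = (2:ℝ)^(L:ℤ) * (2:ℝ)^e := by rw [h2, h4]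
        _ = ((2:ℤ)^L : ℝ) * (2:ℝ)^e := by push_cast [zpow_natCast]; ring
        _ ≤ c := by
            rw [hc]
            exact mul_le_mul_of_nonneg_right h1 (zpow_pos two_pos e).le
    -- distance comparison
    have hnear := h.2 f hfF
    have hdist : c - |s| ≤ |s - c| := by
      have := abs_sub_abs_le_abs_sub c s
      rw [abs_of_nonneg (le_trans (by positivity) hcl)] at this
      rw [abs_sub_comm]
      linarith
    -- numeric contradiction
    have e1pos : (0:ℝ) < (2:ℝ)^(e-1) := zpow_pos two_pos (e-1)
    have h2e : (2:ℝ)^e = 2 * (2:ℝ)^(e-1) := by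
      rw [show e = 1 + (e-1) by ring, zpow_add₀ (two_ne_zero : (2:ℝ) ≠ 0), zpow_one]
      ring_nf
    have hApos : (1:ℝ) ≤ (2:ℝ)^(p-1) := one_le_pow₀ one_le_two
    have hBpos : (2:ℝ) ≤ (2:ℝ)^k := by
      calc (2:ℝ) = 2^1 := (pow_one 2).symm
        _ ≤ 2^k := pow_le_pow_right₀ one_le_two hk1
    have hAB : (2:ℝ)^(p+k) = 2 * ((2:ℝ)^(p-1) * (2:ℝ)^k) := by
      rw [pow_add, show (2:ℝ)^p = 2 * 2^(p-1) by rw [← pow_succ']; congr 1; omega]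
      ring
    have hP : (2:ℝ)^p = 2 * (2:ℝ)^(p-1) := by
      rw [← pow_succ']; congr 1; omega
    have key : |f - c| < c - |s| := by
      calc |f - c| ≤ ((2:ℝ)^k - 1) * (2:ℝ)^e := hfc
        _ = (2*(2:ℝ)^k - 2) * (2:ℝ)^(e-1) := by rw [h2e]; ring
        _ < ((2:ℝ)^(p+k) - ((2:ℝ)^p - 1)) * (2:ℝ)^(e-1) := by
            apply mul_lt_mul_of_pos_right _ e1pos
            rw [hAB, hP]
            nlinarith [hApos, hBpos]
        _ ≤ c - |s| := by nlinarith [hcl, hsb, e1pos]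
    linarith [hnear, key, hdist]

/-- Rounding a multiple of `2^e` yields a multiple of `2^e`. -/
lemma isN_grid (hp : 1 ≤ p) {M e : ℤ} {s : ℝ} (h : IsN p ((M:ℝ) * (2:ℝ)^e) s) :
    Mult e s := by
  rcases le_or_gt (|M|) (2^p - 1) with hle | hgt
  · have := isN_eq ⟨M, e, by omega, rfl⟩ h
    rw [this]
    exact ⟨M, rfl⟩
  · rcases le_or_gt 0 M with hM0 | hM0
    · exact isN_grid_pos hp (by rw [abs_of_nonneg hM0] at hgt; omega) h
    · have heq : ((-M:ℤ):ℝ) * (2:ℝ)^e = -((M:ℝ) * (2:ℝ)^e) := by push_cast; ring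
      have h' : IsN p (((-M:ℤ):ℝ) * (2:ℝ)^e) (-s) := by rw [heq]; exact isN_neg h
      have habs : (2:ℤ)^p ≤ -M := by rw [abs_of_neg hM0] at hgt; omega
      have := mult_neg (isN_grid_pos hp habs h')
      simpa using this

/-- Sterbenz: if `0 ≤ y ≤ x ≤ 2y` for floats `x, y` then `x - y` is a float. -/
lemma sterbenz {x y : ℝ} (hx : FloatRep p x) (hy : FloatRep p y)
    (h0 : 0 ≤ y) (hyx : y ≤ x) (hx2 : x ≤ 2 * y) : FloatRep p (x - y) := by
  obtain ⟨m1, e1, hm1, rfl⟩ := hx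
  obtain ⟨m2, e2, hm2, rfl⟩ := hy
  set E : ℤ := min e1 e2 with hE
  obtain ⟨K1, hK1⟩ := mult_of_rep (m := m1) E (min_le_left e1 e2)
  obtain ⟨K2, hK2⟩ := mult_of_rep (m := m2) E (min_le_right e1 e2)
  rw [show (2:ℝ)^(e1 ⊓ e2) = (2:ℝ)^E from rfl] at hK1 hK2
  have hEpos : (0:ℝ) < (2:ℝ)^E := zpow_pos two_pos E
  refine ⟨K1 - K2, E, ?_, by rw [hK1, hK2]; push_cast; ring⟩
  have hsub : ((K1 - K2 : ℤ):ℝ) * (2:ℝ)^E = m1 * (2:ℝ)^e1 - m2 * (2:ℝ)^e2 := by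
    rw [hK1, hK2]; push_cast; ring
  have hd0 : (0:ℝ) ≤ ((K1 - K2 : ℤ):ℝ) * (2:ℝ)^E := by rw [hsub]; linarith
  have hK12 : (0:ℤ) ≤ K1 - K2 := by
    by_contra hc
    push_neg at hc
    have : ((K1 - K2 : ℤ):ℝ) < 0 := by exact_mod_cast hc
    nlinarith
  rw [abs_of_nonneg hK12]
  rcases min_cases e1 e2 with ⟨hEe, hle⟩ | ⟨hEe, hle⟩
  · -- E = e1 : diff ≤ x = m1 * 2^E
    have he1 : (2:ℝ)^e1 = (2:ℝ)^E := by rw [hE, hEe]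
    have hm1E : (m1:ℝ) * (2:ℝ)^E = (m1:ℝ) * (2:ℝ)^e1 := by rw [he1]
    have hdx : ((K1 - K2 : ℤ):ℝ) * (2:ℝ)^E ≤ (m1:ℝ) * (2:ℝ)^E := by
      rw [hsub, hm1E]; linarith
    have hcmp : ((K1 - K2 : ℤ):ℝ) ≤ (m1:ℝ) := le_of_mul_le_mul_right hdx hEpos
    have h1 : K1 - K2 ≤ m1 := by exact_mod_cast hcmp
    have hm1' : 0 ≤ m1 := by
      by_contra hc
      push_neg at hc
      have : (m1:ℝ) < 0 := by exact_mod_cast hc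
      nlinarith [zpow_pos (two_pos (α := ℝ)) e1]
    have := le_abs_self m1
    omega
  · -- E = e2 : diff ≤ y = m2 * 2^E
    have he2 : (2:ℝ)^e2 = (2:ℝ)^E := by rw [hE, hEe]
    have hm2E : (m2:ℝ) * (2:ℝ)^E = (m2:ℝ) * (2:ℝ)^e2 := by rw [he2]
    have hdy : ((K1 - K2 : ℤ):ℝ) * (2:ℝ)^E ≤ (m2:ℝ) * (2:ℝ)^E := by
      rw [hsub, hm2E]; linarith
    have hcmp : ((K1 - K2 : ℤ):ℝ) ≤ (m2:ℝ) := le_of_mul_le_mul_right hdy hEpos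
    have h1 : K1 - K2 ≤ m2 := by exact_mod_cast hcmp
    have hm2' : 0 ≤ m2 := by
      by_contra hc
      push_neg at hc
      have : (m2:ℝ) < 0 := by exact_mod_cast hc
      nlinarith [zpow_pos (two_pos (α := ℝ)) e2]
    have := le_abs_self m2
    omega

/-- A multiple of `2^e` bounded by `2^(p+e)` is a float. -/
lemma floatRep_of_mult_bound (hp : 1 ≤ p) {x : ℝ} {e : ℤ} (hm : Mult e x)
    (hb : |x| ≤ (2:ℝ)^((p:ℤ) + e)) : FloatRep p x := by
  obtain ⟨K, rfl⟩ := hm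
  apply floatRep_mantissa_le hp
  have hEpos : (0:ℝ) < (2:ℝ)^e := zpow_pos two_pos e
  have h1 : |(K:ℝ)| * (2:ℝ)^e ≤ (2:ℝ)^(p:ℤ) * (2:ℝ)^e := by
    have hz : (2:ℝ)^((p:ℤ)+e) = (2:ℝ)^(p:ℤ) * (2:ℝ)^e := zpow_add₀ (two_ne_zero : (2:ℝ) ≠ 0) _ _
    have ha : |(K:ℝ) * (2:ℝ)^e| = |(K:ℝ)| * (2:ℝ)^e := by
      rw [abs_mul, abs_of_pos hEpos]
    rw [← ha, ← hz]
    exact hb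
  have h2 : |(K:ℝ)| ≤ (2:ℝ)^(p:ℤ) := le_of_mul_le_mul_right h1 hEpos
  have : ((|K|:ℤ):ℝ) ≤ (((2:ℤ)^p:ℤ):ℝ) := by push_cast [zpow_natCast] at h2 ⊢; exact h2
  exact_mod_cast this

/-- The rounding error of a float addition is itself a float. -/
lemma err_add {a b s : ℝ} (ha : FloatRep p a) (hb : FloatRep p b)
    (hs : IsN p (a + b) s) (hp : 1 ≤ p) : FloatRep p (s - (a + b)) := by
  obtain ⟨m1, e1, hm1, ha'⟩ := ha
  obtain ⟨m2, e2, hm2, hb'⟩ := hb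
  set E : ℤ := min e1 e2 with hE
  obtain ⟨K1, hK1⟩ := mult_of_rep (m := m1) E (min_le_left e1 e2)
  obtain ⟨K2, hK2⟩ := mult_of_rep (m := m2) E (min_le_right e1 e2)
  rw [show (2:ℝ)^(e1 ⊓ e2) = (2:ℝ)^E from rfl] at hK1 hK2
  have habE : a + b = ((K1 + K2 : ℤ):ℝ) * (2:ℝ)^E := by
    rw [ha', hb', hK1, hK2]; push_cast; ring
  have hsE : Mult E s := isN_grid hp (habE ▸ hs)
  have hdm : Mult E (s - (a+b)) := mult_sub hsE ⟨K1 + K2, habE⟩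
  -- error bounded by min (|a|, |b|)
  have hea : |s - (a+b)| ≤ |b| := by
    have := hs.2 a ⟨m1, e1, hm1, ha'⟩
    calc |s - (a+b)| ≤ |a - (a+b)| := this
      _ = |b| := by rw [show a - (a+b) = -b by ring, abs_neg]
  have heb : |s - (a+b)| ≤ |a| := by
    have := hs.2 b ⟨m2, e2, hm2, hb'⟩
    calc |s - (a+b)| ≤ |b - (a+b)| := this
      _ = |a| := by rw [show b - (a+b) = -a by ring, abs_neg]
  apply floatRep_of_mult_bound hp hdm
  rcases min_cases e1 e2 with ⟨hEe, _⟩ | ⟨hEe, _⟩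
  · -- E = e1, use |a|
    calc |s - (a+b)| ≤ |a| := heb
      _ ≤ (2:ℝ)^((p:ℤ) + E) := by
        have hab : |(m1:ℝ) * (2:ℝ)^e1| = |(m1:ℝ)| * (2:ℝ)^e1 := by
          rw [abs_mul, abs_of_pos (a := (2:ℝ)^e1) (zpow_pos two_pos e1)]
        rw [ha', hab]
        have h1 : |(m1:ℝ)| ≤ (2:ℝ)^(p:ℤ) := by
          have : ((|m1|:ℤ):ℝ) ≤ (((2:ℤ)^p:ℤ):ℝ) := by exact_mod_cast hm1.le
          push_cast [zpow_natCast] at this ⊢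
          exact this
        have h2 : (2:ℝ)^e1 = (2:ℝ)^E := by rw [hE, hEe]
        rw [h2, zpow_add₀ (two_ne_zero : (2:ℝ) ≠ 0)]
        exact mul_le_mul_of_nonneg_right h1 (zpow_pos two_pos E).le
  · calc |s - (a+b)| ≤ |b| := hea
      _ ≤ (2:ℝ)^((p:ℤ) + E) := by
        have hab : |(m2:ℝ) * (2:ℝ)^e2| = |(m2:ℝ)| * (2:ℝ)^e2 := by
          rw [abs_mul, abs_of_pos (a := (2:ℝ)^e2) (zpow_pos two_pos e2)]
        rw [hb', hab]
        have h1 : |(m2:ℝ)| ≤ (2:ℝ)^(p:ℤ) := by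
          have : ((|m2|:ℤ):ℝ) ≤ (((2:ℤ)^p:ℤ):ℝ) := by exact_mod_cast hm2.le
          push_cast [zpow_natCast] at this ⊢
          exact this
        have h2 : (2:ℝ)^e2 = (2:ℝ)^E := by rw [hE, hEe]
        rw [h2, zpow_add₀ (two_ne_zero : (2:ℝ) ≠ 0)]
        exact mul_le_mul_of_nonneg_right h1 (zpow_pos two_pos E).le

lemma floatRep_double {x : ℝ} (h : FloatRep p x) : FloatRep p (2 * x) := by
  have := floatRep_scale h 1
  simpa [zpow_one, mul_comm] using this

lemma floatRep_half {x : ℝ} (h : FloatRep p x) : FloatRep p (x / 2) := by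
  have := floatRep_scale h (-1)
  have h2 : x * (2:ℝ)^(-1:ℤ) = x / 2 := by
    rw [zpow_neg, zpow_one]
    ring
  rwa [h2] at this

/-- Fast2Sum exactness for nonnegative `a`. -/
lemma fast2sum_pos (hp : 1 ≤ p) {a b s : ℝ} (ha : FloatRep p a) (hb : FloatRep p b)
    (ha0 : 0 ≤ a) (hba : |b| ≤ a) (hs : IsN p (a + b) s) : FloatRep p (s - a) := by
  rcases eq_or_lt_of_le ha0 with ha0' | ha0'
  · -- a = 0, hence b = 0 and s = 0
    have hb0 : b = 0 := by
      have := abs_nonneg b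
      have := hba
      rw [← ha0'] at this
      have hbb := abs_eq_zero.mp (le_antisymm this (abs_nonneg b))
      exact hbb
    have : s = 0 := by
      have h0 : a + b = 0 := by rw [← ha0', hb0]; ring
      rw [h0] at hs
      exact isN_eq floatRep_zero hs
    rw [this, ← ha0']
    simpa using floatRep_zero
  · by_cases hster : b < 0 ∧ a ≤ 2 * (-b)
    · -- Sterbenz: a + b = a - (-b) is a float, so s = a + b
      obtain ⟨hbneg, h2b⟩ := hster
      have hF : FloatRep p (a - (-b)) := by
        apply sterbenz ha (floatRep_neg hb)
        · linarith
        · rw [abs_of_neg hbneg] at hba; linarith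
        · linarith
      have hab : a + b = a - (-b) := by ring
      have hseq : s = a + b := by
        rw [hab] at hs ⊢
        exact isN_eq hF hs
      rw [hseq, show a + b - a = b from by ring]
      exact hb
    · -- t := a + b satisfies a/2 ≤ t ≤ 2a; squeeze s and apply Sterbenz both ways
      push_neg at hster
      set t := a + b with ht
      have htu : t ≤ 2 * a := by
        have := le_abs_self b
        linarith [abs_nonneg b, hba]
      have htl : a / 2 ≤ t := by
        rcases le_or_gt 0 b with hb0 | hb0
        · linarith
        · have := hster hb0
          rw [abs_of_neg hb0] at hba
          linarith
      have hsu : s ≤ 2 * a := isN_upper (floatRep_double ha) hs htu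
      have hsl : a / 2 ≤ s := isN_lower (floatRep_half ha) hs htl
      rcases le_or_gt a s with hcase | hcase
      · have := sterbenz hs.1 ha ha0 hcase (by linarith)
        exact this
      · have := sterbenz ha hs.1 (by linarith) hcase.le (by linarith)
        have := floatRep_neg this
        simpa using this

/-- Fast2Sum exactness: if `|b| ≤ |a|` and `s` is a nearest float to `a+b`,
then `s - a` is a float. -/
lemma fast2sum (hp : 1 ≤ p) {a b s : ℝ} (ha : FloatRep p a) (hb : FloatRep p b)
    (hba : |b| ≤ |a|) (hs : IsN p (a + b) s) : FloatRep p (s - a) := by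
  rcases le_or_gt 0 a with ha0 | ha0
  · rw [abs_of_nonneg ha0] at hba
    exact fast2sum_pos hp ha hb ha0 hba hs
  · have h' : IsN p (-a + -b) (-s) := by
      have := isN_neg hs
      rw [show -(a+b) = -a + -b from by ring] at this
      exact this
    have := fast2sum_pos hp (floatRep_neg ha) (floatRep_neg hb)
      (by linarith) (by rw [abs_neg]; rw [abs_of_neg ha0] at hba; exact hba) h'
    have := floatRep_neg this
    rw [show -(-s - -a) = s - a from by ring] at this
    exact this

/-- A float strictly larger than `(2^p - 1) * 2^(e-1)` in magnitude is a
multiple of `2^e`. -/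
lemma mult_of_large {v : ℝ} {e : ℤ} (hv : FloatRep p v)
    (hb : (((2:ℤ)^p - 1 : ℤ):ℝ) * (2:ℝ)^(e-1) < |v|) : Mult e v := by
  obtain ⟨m, e', hm, rfl⟩ := hv
  rcases le_or_gt e e' with hee | hee
  · exact mult_of_rep e hee
  · exfalso
    have h1 : |(m:ℝ) * (2:ℝ)^e'| ≤ (((2:ℤ)^p - 1 : ℤ):ℝ) * (2:ℝ)^(e-1) := by
      rw [abs_mul, abs_of_pos (a := (2:ℝ)^e') (zpow_pos two_pos e')]
      have hm' : |(m:ℝ)| ≤ (((2:ℤ)^p - 1 : ℤ):ℝ) := by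
        have : |m| ≤ 2^p - 1 := by omega
        exact_mod_cast this
      have he' : (2:ℝ)^e' ≤ (2:ℝ)^(e-1) := zpow_le_zpow_right₀ one_le_two (by omega)
      have h0 : (0:ℝ) ≤ (((2:ℤ)^p - 1 : ℤ):ℝ) := by
        have : (0:ℤ) ≤ 2^p - 1 := by
          have : (1:ℤ) ≤ 2^p := one_le_pow₀ one_le_two
          omega
        exact_mod_cast this
      calc |(m:ℝ)| * (2:ℝ)^e' ≤ (((2:ℤ)^p - 1 : ℤ):ℝ) * (2:ℝ)^e' :=
            mul_le_mul_of_nonneg_right hm' (zpow_pos two_pos e').le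
        _ ≤ (((2:ℤ)^p - 1 : ℤ):ℝ) * (2:ℝ)^(e-1) := mul_le_mul_of_nonneg_left he' h0
    linarith

/-- Every nonzero float has a normalized representation. -/
lemma normalize (hp : 1 ≤ p) {b : ℝ} (hb : FloatRep p b) (hb0 : b ≠ 0) :
    ∃ m e : ℤ, (2:ℤ)^(p-1) ≤ |m| ∧ |m| < 2^p ∧ b = (m:ℝ) * (2:ℝ)^e := by
  obtain ⟨m, e, hm, rfl⟩ := hb
  have hm0 : m ≠ 0 := by
    rintro rfl
    simp at hb0
  set n : ℕ := m.natAbs with hn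
  have habs : |m| = (n : ℤ) := Int.abs_eq_natAbs m
  have hn0 : n ≠ 0 := by omega
  set L : ℕ := Nat.log 2 n with hL
  have hnL : (2:ℕ)^L ≤ n := Nat.pow_log_le_self 2 hn0
  have hnU : n < 2^(L+1) := Nat.lt_pow_succ_log_self one_lt_two n
  have hnp : n < 2^p := by
    have h1 : (n:ℤ) < (2:ℤ)^p := habs ▸ hm
    exact_mod_cast h1
  have hLp : L ≤ p - 1 := by
    by_contra hc
    push_neg at hc
    have hpL : p ≤ L := by omega
    have : (2:ℕ)^p ≤ 2^L := Nat.pow_le_pow_right (by norm_num) hpL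
    omega
  set j : ℕ := p - 1 - L with hj
  have habs2 : |m * 2^j| = (n : ℤ) * 2^j := by
    rw [abs_mul, abs_of_nonneg (by positivity : (0:ℤ) ≤ (2:ℤ)^j), habs]
  refine ⟨m * 2^j, e - j, ?_, ?_, ?_⟩
  · rw [habs2]
    have h3 : (2:ℤ)^(p-1) = 2^L * 2^j := by
      rw [← pow_add]
      congr 1
      omega
    rw [h3]
    have : (2:ℤ)^L ≤ (n:ℤ) := by exact_mod_cast hnL
    exact mul_le_mul_of_nonneg_right this (by positivity)
  · rw [habs2]
    have h3 : (2:ℤ)^p = 2^(L+1) * 2^j := by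
      rw [← pow_add]
      congr 1
      omega
    rw [h3]
    have h4 : (n:ℤ) < 2^(L+1) := by exact_mod_cast hnU
    exact mul_lt_mul_of_pos_right h4 (by positivity)
  · push_cast
    rw [mul_assoc, ← zpow_natCast (2:ℝ) j, ← zpow_add₀ (two_ne_zero : (2:ℝ) ≠ 0)]
    congr 2
    omega

/-- Core of Knuth's TwoSum: when `|a| < b`, both `b - b'` and `x - b'` are
floats, where `x` rounds `a+b` and `b'` rounds `x - a`. -/
lemma core (hp : 1 ≤ p) {a b x b' : ℝ} (ha : FloatRep p a) (hb : FloatRep p b)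
    (hb0 : 0 < b) (hab : |a| < b) (hx : IsN p (a + b) x) (hb' : IsN p (x - a) b') :
    FloatRep p (b - b') ∧ FloatRep p (x - b') := by
  by_cases ha0 : a = 0
  · subst ha0
    have hxb : x = b := by
      rw [zero_add] at hx
      exact isN_eq hb hx
    have hbb : b' = b := by
      rw [hxb, sub_zero] at hb'
      exact isN_eq hb hb'
    rw [hbb, hxb, sub_self]
    exact ⟨floatRep_zero, floatRep_zero⟩
  by_cases hster : a < 0 ∧ b ≤ 2 * (-a)
  · obtain ⟨haneg, h2a⟩ := hster
    have habs : |a| = -a := abs_of_neg haneg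
    have hsF : FloatRep p (b - (-a)) := by
      apply sterbenz hb (floatRep_neg ha) (by linarith) (by linarith) h2a
    have hxs : x = a + b := by
      have : FloatRep p (a + b) := by
        rw [show a + b = b - (-a) from by ring]
        exact hsF
      exact isN_eq this hx
    have hbb : b' = b := by
      rw [hxs, show a + b - a = b from by ring] at hb'
      exact isN_eq hb hb'
    constructor
    · rw [hbb, sub_self]; exact floatRep_zero
    · rw [hbb, hxs, show a + b - b = a from by ring]; exact ha
  -- main case
  have hxF : FloatRep p x := hx.1
  have hmain : 0 ≤ a ∨ (a < 0 ∧ 2 * (-a) < b) := by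
    rcases le_or_gt 0 a with h | h
    · exact Or.inl h
    · right
      refine ⟨h, ?_⟩
      by_contra hc
      push_neg at hc
      exact hster ⟨h, hc⟩
  have hs0 : 0 < a + b := by
    rcases hmain with h | ⟨h1, h2⟩
    · linarith
    · linarith
  have hxa : |a| ≤ x := by
    rcases hmain with h | ⟨h1, h2⟩
    · rw [abs_of_nonneg h]
      have hbx : b ≤ x := isN_lower hb hx (by linarith)
      rw [abs_of_nonneg h] at hab
      linarith
    · rw [abs_of_neg h1]
      exact isN_lower (floatRep_neg ha) hx (by linarith)
  have hx0 : 0 ≤ x := le_trans (abs_nonneg a) hxa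
  -- C2 : x - b' is a float, via Fast2Sum on (x, -a)
  have hC2 : FloatRep p (x - b') := by
    have hb'' : IsN p (x + -a) b' := by rw [← sub_eq_add_neg]; exact hb'
    have := fast2sum hp hxF (floatRep_neg ha)
      (by rw [abs_neg, abs_of_nonneg hx0]; exact hxa) hb''
    have := floatRep_neg this
    rwa [show -(b' - x) = x - b' from by ring] at this
  refine ⟨?_, hC2⟩
  -- C1 : b - b' is a float
  obtain ⟨mb, eb, hmbl, hmbu, hbe⟩ := normalize hp hb hb0.ne'
  obtain ⟨ma, ea, hma, hae⟩ := ha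
  have hebp : (0:ℝ) < (2:ℝ)^eb := zpow_pos two_pos eb
  have hmb0 : 0 < mb := by
    by_contra hc
    push_neg at hc
    have : (mb:ℝ) ≤ 0 := by exact_mod_cast hc
    nlinarith
  have hmbabs : |mb| = mb := abs_of_pos hmb0
  rw [hmbabs] at hmbl hmbu
  -- basic bounds
  have hbub : b ≤ (((2:ℤ)^p - 1 : ℤ):ℝ) * (2:ℝ)^eb := by
    rw [hbe]
    have : (mb:ℝ) ≤ (((2:ℤ)^p - 1 : ℤ):ℝ) := by exact_mod_cast (by omega : mb ≤ 2^p - 1)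
    exact mul_le_mul_of_nonneg_right this hebp.le
  have hpow_pe : (((2:ℤ)^p - 1 : ℤ):ℝ) * (2:ℝ)^eb + (2:ℝ)^eb = (2:ℝ)^((p:ℤ) + eb) := by
    push_cast
    rw [zpow_add₀ (two_ne_zero : (2:ℝ) ≠ 0), zpow_natCast]
    ring
  have hb_lt : b < (2:ℝ)^((p:ℤ) + eb) := by
    rw [← hpow_pe]
    linarith
  have hrb : |x - (a + b)| ≤ |a| := by
    have := hx.2 b hb
    calc |x - (a+b)| ≤ |b - (a+b)| := this
      _ = |a| := by rw [show b - (a+b) = -a from by ring, abs_neg]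
  set E : ℤ := min ea eb with hE
  have hmultA : Mult E a := by rw [hae]; exact mult_of_rep E (min_le_left ea eb)
  have hmultB : Mult E b := by rw [hbe]; exact mult_of_rep E (min_le_right ea eb)
  have hmultS : Mult E (a + b) := mult_add hmultA hmultB
  have hmultX : Mult E x := by
    obtain ⟨Ms, hMs⟩ := hmultS
    exact isN_grid hp (hMs ▸ hx)
  have hmultU : Mult E (x - a) := mult_sub hmultX hmultA
  have hmultB' : Mult E b' := by
    obtain ⟨Mu, hMu⟩ := hmultU
    exact isN_grid hp (hMu ▸ hb')
  have haub : |a| ≤ (((2:ℤ)^p - 1 : ℤ):ℝ) * (2:ℝ)^ea := by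
    rw [hae, abs_mul, abs_of_pos (a := (2:ℝ)^ea) (zpow_pos two_pos ea)]
    have : |(ma:ℝ)| ≤ (((2:ℤ)^p - 1 : ℤ):ℝ) := by
      have : |ma| ≤ 2^p - 1 := by omega
      calc |(ma:ℝ)| = ((|ma| : ℤ):ℝ) := by push_cast; rfl
        _ ≤ _ := by exact_mod_cast this
    exact mul_le_mul_of_nonneg_right this (zpow_pos two_pos ea).le
  rcases le_or_gt (eb + 1) ((p:ℤ) + E) with hnear | hfar
  · -- NEAR case
    have hsb : |a + b| ≤ (2:ℝ)^((p:ℤ) + (eb + 1)) := by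
      rw [abs_of_pos hs0]
      have h1 : a + b ≤ b + |a| := by linarith [le_abs_self a]
      have h2 : b + |a| < 2 * b := by linarith
      have h3 : (2:ℝ) * b < 2 * (2:ℝ)^((p:ℤ) + eb) := by linarith
      have h4 : (2:ℝ) * (2:ℝ)^((p:ℤ) + eb) = (2:ℝ)^((p:ℤ) + (eb + 1)) := by
        rw [show (p:ℤ) + (eb + 1) = ((p:ℤ) + eb) + 1 from by ring,
          zpow_add_one₀ (two_ne_zero : (2:ℝ) ≠ 0)]
        ring
      linarith
    have hr : |x - (a + b)| ≤ (2:ℝ)^eb := by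
      have := isN_err_le hp hx hsb
      rwa [show eb + 1 - 1 = eb from by ring] at this
    have hub : |x - a| ≤ (2:ℝ)^((p:ℤ) + (eb + 1)) := by
      calc |x - a| = |(x - (a + b)) + b| := by ring_nf
        _ ≤ |x - (a+b)| + |b| := abs_add_le _ _
        _ ≤ (2:ℝ)^eb + b := by rw [abs_of_pos hb0]; linarith
        _ ≤ (2:ℝ)^eb + (((2:ℤ)^p - 1 : ℤ):ℝ) * (2:ℝ)^eb := by linarith
        _ = (2:ℝ)^((p:ℤ) + eb) := by rw [← hpow_pe]; ring
        _ ≤ (2:ℝ)^((p:ℤ) + (eb + 1)) := zpow_le_zpow_right₀ one_le_two (by omega)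
    have heps : |b' - (x - a)| ≤ (2:ℝ)^eb := by
      have := isN_err_le hp hb' hub
      rwa [show eb + 1 - 1 = eb from by ring] at this
    have hbb' : |b - b'| ≤ (2:ℝ)^((p:ℤ) + E) := by
      have h1 : b - b' = -((x - (a+b)) + (b' - (x - a))) := by ring
      have h2 : |b - b'| ≤ |x - (a+b)| + |b' - (x - a)| := by
        rw [h1, abs_neg]
        exact abs_add_le _ _
      have h3 : (2:ℝ)^eb + (2:ℝ)^eb = (2:ℝ)^(eb+1) := by
        rw [zpow_add₀ (two_ne_zero : (2:ℝ) ≠ 0), zpow_one]; ring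
      have h4 : (2:ℝ)^(eb+1) ≤ (2:ℝ)^((p:ℤ) + E) := zpow_le_zpow_right₀ one_le_two hnear
      linarith
    exact floatRep_of_mult_bound hp (mult_sub hmultB hmultB') hbb'
  · -- FAR case : (p:ℤ) + E ≤ eb
    have hEea : E = ea := by
      rcases min_cases ea eb with ⟨h1, _⟩ | ⟨h1, h2⟩
      · rw [hE, h1]
      · exfalso
        rw [hE, h1] at hfar
        omega
    have haeb : |a| < (2:ℝ)^eb := by
      have h1 : (((2:ℤ)^p - 1 : ℤ):ℝ) * (2:ℝ)^ea < (2:ℝ)^((p:ℤ) + ea) := by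
        push_cast
        rw [zpow_add₀ (two_ne_zero : (2:ℝ) ≠ 0), zpow_natCast]
        nlinarith [zpow_pos (two_pos (α := ℝ)) ea]
      have h2 : (2:ℝ)^((p:ℤ) + ea) ≤ (2:ℝ)^eb :=
        zpow_le_zpow_right₀ one_le_two (by rw [hEea] at hfar; omega)
      linarith
    have hsb : |a + b| ≤ (2:ℝ)^((p:ℤ) + eb) := by
      rw [abs_of_pos hs0]
      have h1 : a + b ≤ b + |a| := by linarith [le_abs_self a]
      rw [← hpow_pe]
      linarith
    have hr : |x - (a + b)| ≤ (2:ℝ)^(eb - 1) := isN_err_le hp hx hsb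
    have hu_l : b - (2:ℝ)^(eb-1) ≤ x - a := by
      have : x - a = (x - (a+b)) + b := by ring
      rw [this]
      have := abs_le.mp hr
      linarith [this.1]
    have hu_u : x - a ≤ b + (2:ℝ)^(eb-1) := by
      have : x - a = (x - (a+b)) + b := by ring
      rw [this]
      have := abs_le.mp hr
      linarith [this.2]
    have he_half : (2:ℝ)^(eb-1) ≤ (2:ℝ)^eb := zpow_le_zpow_right₀ one_le_two (by omega)
    -- b ± 2^eb are floats
    have hflo : FloatRep p (b - (2:ℝ)^eb) := by
      have : b - (2:ℝ)^eb = ((mb - 1 : ℤ):ℝ) * (2:ℝ)^eb := by rw [hbe]; push_cast; ring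
      rw [this]
      exact floatRep_mantissa_le hp eb (by rw [abs_of_nonneg (by omega)]; omega)
    have hfhi : FloatRep p (b + (2:ℝ)^eb) := by
      have : b + (2:ℝ)^eb = ((mb + 1 : ℤ):ℝ) * (2:ℝ)^eb := by rw [hbe]; push_cast; ring
      rw [this]
      exact floatRep_mantissa_le hp eb (by rw [abs_of_nonneg (by omega)]; omega)
    have hb'_l : b - (2:ℝ)^eb ≤ b' := isN_lower hflo hb' (by linarith)
    have hb'_u : b' ≤ b + (2:ℝ)^eb := isN_upper hfhi hb' (by linarith)
    -- b' is a multiple of 2^(eb-1)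
    have hmultB'' : Mult (eb - 1) b' := by
      apply mult_of_large hb'.1
      rcases eq_or_lt_of_le hp with hp1 | hp2
      · -- p = 1 : mb = 1, use the extra competitor 2^(eb-1)
        have hmb1 : mb = 1 := by
          have : (2:ℤ)^(p-1) = 1 := by rw [← hp1]; rfl
          have : (2:ℤ)^p = 2 := by rw [← hp1]; rfl
          omega
        have hflo2 : FloatRep p ((1:ℝ) * (2:ℝ)^(eb-1)) := by
          refine ⟨1, eb - 1, ?_, by push_cast; ring⟩
          have : (1:ℤ) < 2^p := by
            have : (2:ℤ)^1 ≤ 2^p := pow_le_pow_right₀ one_le_two hp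
            omega
          simpa using this
        have hb'l2 : (1:ℝ) * (2:ℝ)^(eb-1) ≤ b' := by
          apply isN_lower hflo2 hb'
          have hbeq : b = (2:ℝ)^eb := by rw [hbe, hmb1]; push_cast; ring
          have h2 : (2:ℝ)^eb = 2 * (2:ℝ)^(eb-1) := by
            rw [show eb = 1 + (eb - 1) from by ring,
              zpow_add₀ (two_ne_zero : (2:ℝ) ≠ 0), zpow_one]
            ring_nf
          rw [one_mul]
          rw [hbeq, h2] at hu_l
          linarith
        have hgap : (((2:ℤ)^p - 1 : ℤ):ℝ) * (2:ℝ)^(eb - 1 - 1) < (1:ℝ) * (2:ℝ)^(eb-1) := by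
          have hc : (((2:ℤ)^p - 1 : ℤ):ℝ) = 1 := by rw [← hp1]; norm_num
          rw [hc, one_mul, one_mul]
          exact zpow_lt_zpow_right₀ one_lt_two (by omega)
        have : (0:ℝ) < b' := lt_of_lt_of_le (by positivity) hb'l2
        rw [abs_of_pos this]
        linarith
      · -- p ≥ 2
        have hblow : (((2:ℤ)^(p-1) - 1 : ℤ):ℝ) * (2:ℝ)^eb ≤ b' := by
          have h1 : (((2:ℤ)^(p-1) - 1 : ℤ):ℝ) * (2:ℝ)^eb ≤ b - (2:ℝ)^eb := by
            have : (((2:ℤ)^(p-1) : ℤ):ℝ) * (2:ℝ)^eb ≤ b := by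
              rw [hbe]
              have : (((2:ℤ)^(p-1) : ℤ):ℝ) ≤ (mb:ℝ) := by exact_mod_cast hmbl
              exact mul_le_mul_of_nonneg_right this hebp.le
            push_cast at this ⊢
            nlinarith [hebp]
          linarith
        have hpos : (0:ℝ) < b' := by
          have h2 : (1:ℝ) ≤ (((2:ℤ)^(p-1) - 1 : ℤ):ℝ) := by
            have : (2:ℤ) ≤ 2^(p-1) := by
              calc (2:ℤ) = 2^1 := by norm_num
                _ ≤ 2^(p-1) := pow_le_pow_right₀ one_le_two (by omega)
            have h3 : (2:ℤ) - 1 ≤ 2^(p-1) - 1 := by omega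
            exact_mod_cast (by omega : (1:ℤ) ≤ 2^(p-1) - 1)
          nlinarith [hebp]
        have hq : (2:ℝ)^(eb - 1 - 1) = (2:ℝ)^eb / 4 := by
          rw [show eb - 1 - 1 = eb + (-2) from by ring,
            zpow_add₀ (two_ne_zero : (2:ℝ) ≠ 0),
            show (2:ℝ)^(-2:ℤ) = 1/4 from by norm_num]
          ring
        have hP : (2:ℝ)^(p:ℕ) = 2 * (2:ℝ)^(p-1) := by
          rw [← pow_succ']; congr 1; omega
        have hPviaZ : (((2:ℤ)^p - 1 : ℤ):ℝ) = 2 * (2:ℝ)^(p-1) - 1 := by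
          push_cast
          rw [hP]
        have hPm : (((2:ℤ)^(p-1) - 1 : ℤ):ℝ) = (2:ℝ)^(p-1) - 1 := by push_cast; ring
        rw [abs_of_pos hpos, hq, hPviaZ]
        have hA2 : (2:ℝ) ≤ (2:ℝ)^(p-1) := by
          calc (2:ℝ) = 2^1 := by norm_num
            _ ≤ 2^(p-1) := pow_le_pow_right₀ one_le_two (by omega)
        rw [hPm] at hblow
        have hstep : (2 * (2:ℝ)^(p-1) - 1) * ((2:ℝ)^eb / 4)
            < ((2:ℝ)^(p-1) - 1) * (2:ℝ)^eb := by
          have hd : ((2:ℝ)^(p-1) - 1) * (2:ℝ)^eb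
              - (2 * (2:ℝ)^(p-1) - 1) * ((2:ℝ)^eb / 4)
              = ((2 * (2:ℝ)^(p-1) - 3) * (2:ℝ)^eb) / 4 := by ring
          have hpos2 : (0:ℝ) < ((2 * (2:ℝ)^(p-1) - 3) * (2:ℝ)^eb) / 4 :=
            div_pos (mul_pos (by linarith) hebp) (by norm_num)
          linarith
        linarith
    have hmultBB : Mult (eb - 1) b := by
      rw [hbe]; exact mult_of_rep (eb - 1) (by omega)
    have hbb' : |b - b'| ≤ (2:ℝ)^((p:ℤ) + (eb - 1)) := by
      have h1 : |b - b'| ≤ (2:ℝ)^eb := abs_le.mpr ⟨by linarith, by linarith⟩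
      have h2 : (2:ℝ)^eb ≤ (2:ℝ)^((p:ℤ) + (eb - 1)) :=
        zpow_le_zpow_right₀ one_le_two (by omega)
      linarith
    exact floatRep_of_mult_bound hp (mult_sub hmultBB hmultB'') hbb'

end TS

/-- TwoSum exactness (no magnitude ordering required). -/
theorem twosum_exact (p : ℕ) (hp : 1 ≤ p) (RN : ℝ → ℝ)
    (hRN : IsRoundNearest p RN) (a b : ℝ)
    (ha : FloatRep p a) (hb : FloatRep p b)
    (x bvirtual avirtual broundoff aroundoff y : ℝ)
    (hx : x = RN (a + b))
    (hbv : bvirtual = RN (x - a))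
    (hav : avirtual = RN (x - bvirtual))
    (hbr : broundoff = RN (b - bvirtual))
    (har : aroundoff = RN (a - avirtual))
    (hy : y = RN (aroundoff + broundoff)) :
    x + y = a + b := by
  have hN : ∀ t, IsN p t (RN t) := fun t => ⟨(hRN t).1, (hRN t).2⟩
  have hid : ∀ t, FloatRep p t → RN t = t := fun t ht => TS.isN_eq ht (hN t)
  subst hy har hbr hav hbv hx
  have herr : FloatRep p (a + b - RN (a + b)) := by
    have h1 := TS.err_add ha hb (hN (a+b)) hp
    have h2 := TS.floatRep_neg h1
    rwa [show -(RN (a+b) - (a+b)) = a + b - RN (a+b) from by ring] at h2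
  rcases le_or_gt (|b|) (|a|) with hba | hba
  · -- |b| ≤ |a| : Fast2Sum case
    have hF : FloatRep p (RN (a+b) - a) := TS.fast2sum hp ha hb hba (hN (a+b))
    rw [hid _ hF]
    rw [show RN (a+b) - (RN (a+b) - a) = a from by ring]
    rw [hid a ha]
    rw [sub_self a, hid 0 TS.floatRep_zero]
    rw [show b - (RN (a+b) - a) = a + b - RN (a+b) from by ring]
    rw [hid _ herr, zero_add, hid _ herr]
    ring
  · -- |a| < |b|
    have hb0 : b ≠ 0 := by
      intro h
      rw [h, abs_zero] at hba
      linarith [abs_nonneg a]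
    have hcore : FloatRep p (b - RN (RN (a+b) - a)) ∧
        FloatRep p (RN (a+b) - RN (RN (a+b) - a)) := by
      rcases lt_or_gt_of_ne hb0 with hbneg | hbpos
      · have h1 : IsN p (-a + -b) (-(RN (a+b))) := by
          have := TS.isN_neg (hN (a+b))
          rwa [show -(a+b) = -a + -b from by ring] at this
        have h2 : IsN p (-(RN (a+b)) - -a) (-(RN (RN (a+b) - a))) := by
          have := TS.isN_neg (hN (RN (a+b) - a))
          rwa [show -(RN (a+b) - a) = -(RN (a+b)) - -a from by ring] at this
        have habs : |(-a)| < -b := by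
          rw [abs_neg]
          rw [abs_of_neg hbneg] at hba
          exact hba
        have hc := TS.core hp (TS.floatRep_neg ha) (TS.floatRep_neg hb)
          (by linarith) habs h1 h2
        constructor
        · have := TS.floatRep_neg hc.1
          rwa [show -(-b - -(RN (RN (a+b) - a))) = b - RN (RN (a+b) - a) from by ring] at this
        · have := TS.floatRep_neg hc.2
          rwa [show -(-(RN (a+b)) - -(RN (RN (a+b) - a)))
            = RN (a+b) - RN (RN (a+b) - a) from by ring] at this
      · have habs : |a| < b := by rwa [abs_of_pos hbpos] at hba
        exact TS.core hp ha hb hbpos habs (hN (a+b)) (hN (RN (a+b) - a))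
    obtain ⟨hC1, hC2⟩ := hcore
    have harF : FloatRep p (a - (RN (a+b) - RN (RN (a+b) - a))) := by
      have h2 : IsN p (RN (a+b) + -a) (RN (RN (a+b) - a)) := by
        have := hN (RN (a+b) - a)
        rwa [show RN (a+b) - a = RN (a+b) + -a from by ring] at this
      have := TS.err_add (hN (a+b)).1 (TS.floatRep_neg ha) h2 hp
      rwa [show RN (RN (a+b) - a) - (RN (a+b) + -a)
        = a - (RN (a+b) - RN (RN (a+b) - a)) from by ring] at this
    rw [hid _ hC2, hid _ harF, hid _ hC1]
    rw [show a - (RN (a+b) - RN (RN (a+b) - a)) + (b - RN (RN (a+b) - a))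
      = a + b - RN (a+b) from by ring]
    rw [hid _ herr]
    ring
end

section
/- Exact representability of the product rounding error: let p ≥ 1, let RN be a round-to-nearest function for precision p, and let a, b be precision-p binary floating-point numbers. Then a·b − RN(a·b) is itself a precision-p binary floating-point number. -/
-- any m with |m| ≤ 2^p gives a float
lemma floatRep_of_abs_le {p : ℕ} (hp : 1 ≤ p) (m e : ℤ) (h : |m| ≤ 2 ^ p) :
    FloatRep p ((m : ℝ) * (2 : ℝ) ^ e) := by
  rcases lt_or_eq_of_le h with h | h
  · exact ⟨m, e, h, rfl⟩
  · rcases abs_eq (by positivity : (0:ℤ) ≤ 2 ^ p) |>.mp h with rfl | rfl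
    · refine ⟨1, e + p, ?_, ?_⟩
      · have h2 : (2:ℤ) ≤ 2 ^ p := by
          calc (2:ℤ) = 2^1 := (pow_one 2).symm
            _ ≤ 2^p := pow_le_pow_right₀ (by norm_num) hp
        simp only [abs_one]; linarith
      · push_cast
        rw [zpow_add₀ (by norm_num), zpow_natCast]
        ring
    · refine ⟨-1, e + p, ?_, ?_⟩
      · have h2 : (2:ℤ) ≤ 2 ^ p := by
          calc (2:ℤ) = 2^1 := (pow_one 2).symm
            _ ≤ 2^p := pow_le_pow_right₀ (by norm_num) hp
        simp only [abs_neg, abs_one]; linarith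
      · push_cast
        rw [zpow_add₀ (by norm_num), zpow_natCast]
        ring

-- nearest float within half-ulp
lemma exists_near (p : ℕ) (hp : 1 ≤ p) (x : ℝ) :
    ∃ f : ℝ, FloatRep p f ∧ |f - x| ≤ (2:ℝ) ^ (Int.log 2 |x| - (p:ℤ)) := by
  set L : ℤ := Int.log 2 |x| with hL
  set e : ℤ := L - p + 1 with he
  set y : ℝ := x * 2 ^ (-e) with hy
  set m : ℤ := round y with hm
  have h2e : (0:ℝ) < 2 ^ (-e) := zpow_pos (by norm_num) _
  have h2e' : (0:ℝ) < 2 ^ e := zpow_pos (by norm_num) _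
  have hylt : |y| < (2:ℝ) ^ (p:ℤ) := by
    rw [hy, abs_mul, abs_of_pos h2e]
    have hlt : |x| < (2:ℝ) ^ (L + 1) := by
      have := Int.lt_zpow_succ_log_self (b := 2) (by norm_num) |x|
      simpa using this
    calc |x| * 2 ^ (-e) < (2:ℝ) ^ (L + 1) * 2 ^ (-e) :=
          mul_lt_mul_of_pos_right hlt h2e
      _ = (2:ℝ) ^ (p:ℤ) := by
          rw [← zpow_add₀ (by norm_num : (2:ℝ) ≠ 0)]
          congr 1
          omega
  have hmle : |m| ≤ 2 ^ p := by
    have h1 : |(m:ℝ)| ≤ |(m:ℝ) - y| + |y| := by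
      have := abs_sub_abs_le_abs_sub (m:ℝ) y
      nlinarith [abs_nonneg ((m:ℝ) - y), abs_sub ((m:ℝ)) y]
    have h2 : |(m:ℝ) - y| ≤ 1/2 := by
      rw [hm, abs_sub_comm]; exact abs_sub_round y
    have : |(m:ℝ)| < (2:ℝ)^(p:ℤ) + 1 := by linarith
    have : ((|m| : ℤ) : ℝ) < ((2^p + 1 : ℤ) : ℝ) := by push_cast; simpa using this
    exact_mod_cast Int.lt_add_one_iff.mp (by exact_mod_cast this)
  refine ⟨(m:ℝ) * 2 ^ e, floatRep_of_abs_le hp m e hmle, ?_⟩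
  have hxe : y * 2 ^ e = x := by
    rw [hy, mul_assoc, ← zpow_add₀ (by norm_num : (2:ℝ) ≠ 0)]
    simp
  calc |(m:ℝ) * 2 ^ e - x| = |(m:ℝ) - y| * 2 ^ e := by
        rw [← hxe, ← sub_mul, abs_mul, abs_of_pos h2e']
    _ ≤ (1/2) * 2 ^ e := by
        have : |(m:ℝ) - y| ≤ 1/2 := by rw [hm, abs_sub_comm]; exact abs_sub_round y
        exact mul_le_mul_of_nonneg_right this h2e'.le
    _ = (2:ℝ) ^ (L - p) := by
        rw [he, show L - (p:ℤ) + 1 = (L - p) + 1 by ring, zpow_add₀ (by norm_num : (2:ℝ) ≠ 0)]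
        ring

-- canonical representation with maximal exponent
lemma canonical (p : ℕ) (c : ℝ) (hc : FloatRep p c) (hc0 : c ≠ 0) :
    ∃ m : ℤ, |m| < 2 ^ p ∧ c = (m:ℝ) * (2:ℝ) ^ (Int.log 2 |c| - (p:ℤ) + 1) := by
  obtain ⟨m0, e0, hm0, hce⟩ := hc
  set L : ℤ := Int.log 2 |c| with hL
  set e : ℤ := L - p + 1 with he
  have hcpos : (0:ℝ) < |c| := abs_pos.mpr hc0
  have hee0 : e ≤ e0 := by
    have hclt : |c| < (2:ℝ) ^ ((p:ℤ) + e0) := by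
      rw [hce, abs_mul, abs_of_pos (zpow_pos (by norm_num : (0:ℝ) < 2) e0)]
      have : |(m0:ℝ)| < (2:ℝ) ^ (p:ℤ) := by
        rw [← Int.cast_abs, zpow_natCast]
        exact_mod_cast hm0
      calc |(m0:ℝ)| * 2 ^ e0 < (2:ℝ)^(p:ℤ) * 2 ^ e0 :=
            mul_lt_mul_of_pos_right this (zpow_pos (by norm_num) _)
        _ = (2:ℝ) ^ ((p:ℤ) + e0) := (zpow_add₀ (by norm_num : (2:ℝ) ≠ 0) _ _).symm
    have := (Int.lt_zpow_iff_log_lt (b := 2) (by norm_num) hcpos).mp (by simpa using hclt)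
    omega
  refine ⟨m0 * 2 ^ (e0 - e).toNat, ?_, ?_⟩
  · have hcabs : |c| < (2:ℝ) ^ ((p:ℤ) + e) := by
      have := Int.lt_zpow_succ_log_self (b := 2) (by norm_num) |c|
      have h2 : L + 1 = (p:ℤ) + e := by omega
      rw [← h2]; simpa using this
    have : (|m0 * 2 ^ (e0 - e).toNat| : ℝ) < ((2:ℝ)^(p:ℕ)) := by
      push_cast
      rw [abs_mul, abs_pow]
      have hsplit : |(m0:ℝ)| * |(2:ℝ)| ^ (e0 - e).toNat * (2:ℝ)^e = |c| := by
        rw [hce, abs_mul, abs_of_pos (zpow_pos (by norm_num : (0:ℝ) < 2) e0)]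
        rw [abs_of_pos (by norm_num : (0:ℝ) < 2)]
        rw [mul_assoc, ← zpow_natCast (2:ℝ) (e0-e).toNat, ← zpow_add₀ (by norm_num : (2:ℝ) ≠ 0)]
        congr 2
        omega
      have h2e : (0:ℝ) < 2 ^ e := zpow_pos (by norm_num) _
      rw [← mul_lt_mul_iff_of_pos_right h2e, hsplit]
      calc |c| < (2:ℝ) ^ ((p:ℤ) + e) := hcabs
        _ = (2:ℝ)^(p:ℕ) * 2 ^ e := by
            rw [zpow_add₀ (by norm_num : (2:ℝ) ≠ 0), zpow_natCast]
    exact_mod_cast this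
  · rw [hce]
    push_cast
    rw [mul_assoc, ← zpow_natCast (2:ℝ) (e0-e).toNat, ← zpow_add₀ (by norm_num : (2:ℝ) ≠ 0)]
    congr 2
    omega

/-- The rounding error of a product of two precision-`p` floats is itself a
precision-`p` float. -/
theorem prod_error_representable (p : ℕ) (hp : 1 ≤ p) (RN : ℝ → ℝ)
    (hRN : IsRoundNearest p RN) (a b : ℝ)
    (ha : FloatRep p a) (hb : FloatRep p b) :
    FloatRep p (a * b - RN (a * b)) := by
  have two_ne : (2:ℝ) ≠ 0 := by norm_num
  have hp2 : (1:ℤ) < 2 ^ p := by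
    calc (1:ℤ) < 2 := by norm_num
      _ = 2^1 := (pow_one 2).symm
      _ ≤ 2^p := pow_le_pow_right₀ (by norm_num) hp
  by_cases hab : a * b = 0
  · -- RN 0 = 0, so the error is 0
    have h0 : FloatRep p 0 := ⟨0, 0, by simpa using hp2.le.trans_lt' (by norm_num), by simp⟩
    have h1 := (hRN (a * b)).2 0 h0
    rw [hab] at h1 ⊢
    simp only [sub_zero, abs_zero] at h1
    have hRN0 : RN 0 = 0 := abs_nonpos_iff.mp h1
    rw [hRN0]
    exact ⟨0, 0, by simpa using hp2.le.trans_lt' (by norm_num), by norm_num⟩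
  · set x : ℝ := a * b with hx
    set L : ℤ := Int.log 2 |x| with hL
    have hxpos : (0:ℝ) < |x| := abs_pos.mpr hab
    have h2L : (2:ℝ) ^ L ≤ |x| := Int.zpow_log_le_self (by norm_num) hxpos
    -- the half-ulp error bound
    obtain ⟨f, hf, hfx⟩ := exists_near p hp x
    have herr : |RN x - x| ≤ (2:ℝ) ^ (L - p) := le_trans ((hRN x).2 f hf) hfx
    set c : ℝ := RN x with hc
    -- RN x ≠ 0
    have hc0 : c ≠ 0 := by
      intro h
      rw [h] at herr
      simp only [zero_sub, abs_neg] at herr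
      have h1 : (2:ℝ) ^ (L - p) ≤ 2 ^ (L - 1) :=
        zpow_le_zpow_right₀ (by norm_num) (by omega)
      have h2 : (2:ℝ) ^ (L - 1) < 2 ^ L := zpow_lt_zpow_right₀ (by norm_num) (by omega)
      linarith
    -- |c| ≥ 2^(L-1)
    have hcge : (2:ℝ) ^ (L - 1) ≤ |c| := by
      have h1 : (2:ℝ) ^ (L - p) ≤ 2 ^ (L - 1) :=
        zpow_le_zpow_right₀ (by norm_num) (by omega)
      have h2 : |x| - |c| ≤ |c - x| := by
        have := abs_sub_abs_le_abs_sub x c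
        rw [abs_sub_comm] at this
        linarith
      have h3 : (2:ℝ)^L = 2^(L-1) + 2^(L-1) := by
        rw [show L = (L-1) + 1 by ring, zpow_add₀ two_ne]
        ring
      linarith
    have hLc : L - 1 ≤ Int.log 2 |c| :=
      (Int.zpow_le_iff_le_log (by norm_num) (abs_pos.mpr hc0)).mp (by simpa using hcge)
    -- canonical representation of c
    set ec : ℤ := Int.log 2 |c| - p + 1 with hec
    obtain ⟨mc, hmc, hceq⟩ := canonical p c (hRN x).1 hc0
    -- representation of x = a*b
    obtain ⟨ma, ea, hma, haeq⟩ := ha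
    obtain ⟨mb, eb, hmb, hbeq⟩ := hb
    set E : ℤ := ea + eb with hE
    have hxeq : x = ((ma * mb : ℤ) : ℝ) * 2 ^ E := by
      rw [hx, haeq, hbeq, hE, zpow_add₀ two_ne]
      push_cast
      ring
    have hM : |ma * mb| < 2 ^ (2 * p) := by
      rw [abs_mul, two_mul, pow_add]
      exact mul_lt_mul'' hma hmb (abs_nonneg _) (abs_nonneg _)
    -- E ≥ L - 2p + 1
    have hEge : L - 2 * p + 1 ≤ E := by
      have h1 : |x| < (2:ℝ) ^ ((2 * p : ℤ) + E) := by
        rw [hxeq, abs_mul, abs_of_pos (zpow_pos (by norm_num : (0:ℝ) < 2) E)]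
        have : |((ma * mb : ℤ) : ℝ)| < (2:ℝ) ^ ((2*p : ℕ) : ℤ) := by
          rw [← Int.cast_abs, zpow_natCast]
          exact_mod_cast hM
        calc |((ma * mb : ℤ) : ℝ)| * 2 ^ E < (2:ℝ) ^ ((2*p : ℕ) : ℤ) * 2 ^ E :=
              mul_lt_mul_of_pos_right this (zpow_pos (by norm_num) _)
          _ = (2:ℝ) ^ ((2 * p : ℤ) + E) := by
              rw [← zpow_add₀ two_ne]
              first | rfl | (congr 1; omega)
      have := (Int.lt_zpow_iff_log_lt (b := 2) (by norm_num) hxpos).mp (by simpa using h1)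
      omega
    have hecge : L - 2 * p + 1 ≤ ec := by omega
    set g : ℤ := min E ec with hg
    have hgge : L - 2 * p + 1 ≤ g := le_min hEge hecge
    set N : ℤ := ma * mb * 2 ^ (E - g).toNat - mc * 2 ^ (ec - g).toNat with hN
    have hEg : (2:ℝ) ^ (E - g).toNat * 2 ^ g = 2 ^ E := by
      rw [← zpow_natCast (2:ℝ), ← zpow_add₀ two_ne]
      congr 1
      have : g ≤ E := min_le_left _ _
      omega
    have hecg : (2:ℝ) ^ (ec - g).toNat * 2 ^ g = 2 ^ ec := by
      rw [← zpow_natCast (2:ℝ), ← zpow_add₀ two_ne]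
      congr 1
      have : g ≤ ec := min_le_right _ _
      omega
    have hdiff : x - c = (N : ℝ) * 2 ^ g := by
      rw [hxeq, hceq, ← hec, hN, ← hEg, ← hecg]
      push_cast
      ring
    have hNlt : |N| < 2 ^ p := by
      have h2g : (0:ℝ) < 2 ^ g := zpow_pos (by norm_num) _
      have h1 : |(N:ℝ)| * 2 ^ g ≤ (2:ℝ) ^ (L - p) := by
        rw [← abs_of_pos h2g, ← abs_mul, ← hdiff, abs_sub_comm]
        exact herr
      have h2 : (2:ℝ) ^ (L - p) < 2 ^ ((p:ℤ) + g) := by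
        apply zpow_lt_zpow_right₀ (by norm_num)
        omega
      have h3 : |(N:ℝ)| < (2:ℝ) ^ (p:ℤ) := by
        have := lt_of_le_of_lt h1 h2
        rw [zpow_add₀ two_ne] at this
        have := lt_of_mul_lt_mul_right this h2g.le
        exact this
      rw [← Int.cast_abs, zpow_natCast] at h3
      exact_mod_cast h3
    exact ⟨N, g, hNlt, hdiff⟩
end
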